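/- arXiv:0907.2034 — 11 statements merged into one kernel-verified Lean document; each statement's English description precedes it below -/
import Mathlib

section
/- Let L be a Lie algebra over a field K, δ ∈ K with δ ≠ 1, and φ : L → L a linear map satisfying φ([x,y]) = δ[x,φ(y)] for all x,y ∈ L. Then φ([[x,y],z]) = 0 for all x,y,z ∈ L; in particular, if L is perfect then φ = 0. -/
/-!
Put `w = ⁅⁅x, y⁆, φ z⁆`. Applying the hypothesis once to the outer bracket gives
`φ ⁅⁅x, y⁆, z⁆ = δ • w`, while expanding `⁅⁅x, y⁆, z⁆` by the Jacobi identity and applying it twice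
to each term gives `δ² • w`. So `δ • w` is fixed by multiplication with `δ ≠ 1`, hence zero.
If `L` is perfect, then `L = ⁅⁅L, L⁆, L⁆` is spanned by such double brackets.
-/

namespace LieSubmodule

variable {R L M P : Type*} [CommRing R] [LieRing L] [LieAlgebra R L]
  [AddCommGroup M] [Module R M] [LieRingModule L M] [LieModule R L M]
  [AddCommGroup P] [Module R P]

theorem lie_le_ker_iff (I : LieIdeal R L) (N : LieSubmodule R L M) (f : M →ₗ[R] P) :
    ((⁅I, N⁆ : LieSubmodule R L M) : Submodule R M) ≤ LinearMap.ker f ↔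
      ∀ x ∈ I, ∀ m ∈ N, f ⁅x, m⁆ = 0 := by
  rw [lieIdeal_oper_eq_linear_span', Submodule.span_le]
  constructor
  · exact fun h x hx m hm => h ⟨x, hx, m, hm, rfl⟩
  · rintro h _ ⟨x, hx, m, hm, rfl⟩
    exact h x hx m hm

end LieSubmodule

section

variable {R L : Type*} [CommRing R] [LieRing L] [LieAlgebra R L] {δ : R} {φ : L →ₗ[R] L}

theorem map_lie_lie_eq_mul_smul (hφ : ∀ x y : L, φ ⁅x, y⁆ = δ • ⁅x, φ y⁆) (x y z : L) :
    φ ⁅⁅x, y⁆, z⁆ = (δ * δ) • ⁅⁅x, y⁆, φ z⁆ := by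
  rw [lie_lie, map_sub, hφ, hφ, hφ, hφ]
  simp only [lie_smul, smul_smul, lie_lie, smul_sub]

theorem map_lie_lie_eq_zero [IsDomain R] [Module.IsTorsionFree R L] (hδ : δ ≠ 1)
    (hφ : ∀ x y : L, φ ⁅x, y⁆ = δ • ⁅x, φ y⁆) (x y z : L) : φ ⁅⁅x, y⁆, z⁆ = 0 := by
  have hfix : δ • φ ⁅⁅x, y⁆, z⁆ = φ ⁅⁅x, y⁆, z⁆ := by
    rw [hφ, smul_smul, ← map_lie_lie_eq_mul_smul hφ, hφ]
  have hsub : (δ - 1) • φ ⁅⁅x, y⁆, z⁆ = 0 := by rw [sub_smul, one_smul, hfix, sub_self]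
  exact (smul_eq_zero_iff_right (sub_ne_zero.mpr hδ)).mp hsub

theorem eq_zero_of_map_lie_lie_eq_zero (hperf : ⁅(⊤ : LieIdeal R L), (⊤ : LieIdeal R L)⁆ = ⊤)
    (hφ : ∀ x y z : L, φ ⁅⁅x, y⁆, z⁆ = 0) : φ = 0 := by
  have hbracket : ∀ z x : L, x ∈ ⁅(⊤ : LieIdeal R L), (⊤ : LieIdeal R L)⁆ → φ ⁅z, x⁆ = 0 := by
    intro z x hx
    refine (LieSubmodule.lie_le_ker_iff ⊤ (⊤ : LieIdeal R L) (φ ∘ₗ LieAlgebra.ad R L z)).mpr ?_ hx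
    intro x _ y _
    rw [LinearMap.comp_apply, LieAlgebra.ad_apply, ← lie_skew, map_neg, hφ, neg_zero]
  have hmem (w : L) : w ∈ ⁅(⊤ : LieIdeal R L), ⁅(⊤ : LieIdeal R L), (⊤ : LieIdeal R L)⁆⁆ := by
    rw [hperf, hperf]
    exact LieSubmodule.mem_top w
  ext w
  exact (LieSubmodule.lie_le_ker_iff ⊤ _ φ).mpr (fun z _ => hbracket z) (hmem w)

end

/-- If `δ ≠ 1` and `φ ⁅x,y⁆ = δ • ⁅x, φ y⁆` for all `x y`, then `φ` vanishes on
`⁅⁅L,L⁆,L⁆`; in particular, if `L` is perfect then `φ = 0`. -/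
theorem phi_vanishes_on_second_commutant (K L : Type*) [Field K] [LieRing L]
    [LieAlgebra K L] (δ : K) (hδ : δ ≠ 1) (φ : L →ₗ[K] L)
    (hφ : ∀ x y : L, φ ⁅x, y⁆ = δ • ⁅x, φ y⁆) :
    (∀ x y z : L, φ ⁅⁅x, y⁆, z⁆ = 0) ∧
      (⁅(⊤ : LieIdeal K L), (⊤ : LieIdeal K L)⁆ = ⊤ → φ = 0) :=
  ⟨map_lie_lie_eq_zero hδ hφ,
    fun hperf => eq_zero_of_map_lie_lie_eq_zero hperf (map_lie_lie_eq_zero hδ hφ)⟩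
end

section
/- Let L be a centerless Lie algebra over a field K, δ ∈ K with δ ≠ 0, 1, and φ : L → L a linear map satisfying φ([x,y]) = δ[x,φ(y)] = δ[φ(x),y] for all x,y ∈ L. Then φ = 0. -/
/-- If `L` is centerless, `δ ≠ 0, 1`, and `φ ⁅x,y⁆ = δ•⁅x, φ y⁆ = δ•⁅φ x, y⁆`
for all `x y`, then `φ = 0`. -/
theorem phi_zero_of_centerless (K L : Type*) [Field K] [LieRing L]
    [LieAlgebra K L] (δ : K) (hδ0 : δ ≠ 0) (hδ1 : δ ≠ 1)
    (hZ : ∀ z : L, (∀ x : L, ⁅z, x⁆ = 0) → z = 0) (φ : L →ₗ[K] L)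
    (hφ : ∀ x y : L, φ ⁅x, y⁆ = δ • ⁅x, φ y⁆ ∧ φ ⁅x, y⁆ = δ • ⁅φ x, y⁆) :
    φ = 0 := by
  have swap : ∀ a b : L, ⁅φ a, b⁆ = ⁅a, φ b⁆ := by
    intro a b
    have h := (hφ a b).1.symm.trans (hφ a b).2
    exact (smul_right_injective L hδ0 h).symm
  have key : ∀ x y z : L, ⁅(⁅x, y⁆ : L), φ z⁆ = 0 := by
    intro x y z
    have e1 : φ ⁅x, ⁅y, z⁆⁆ = (δ * δ) • ⁅x, ⁅y, φ z⁆⁆ := by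
      rw [(hφ x ⁅y, z⁆).1, (hφ y z).1, lie_smul, smul_smul]
    have e2 : φ ⁅y, ⁅x, z⁆⁆ = (δ * δ) • ⁅y, ⁅x, φ z⁆⁆ := by
      rw [(hφ y ⁅x, z⁆).1, (hφ x z).1, lie_smul, smul_smul]
    have e3 : φ ⁅(⁅x, y⁆ : L), z⁆ = δ • ⁅(⁅x, y⁆ : L), φ z⁆ := (hφ _ _).1
    have e4 : δ • ⁅(⁅x, y⁆ : L), φ z⁆ = (δ * δ) • ⁅(⁅x, y⁆ : L), φ z⁆ := by
      rw [← e3, lie_lie, map_sub, e1, e2, lie_lie, smul_sub]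
    have e5 : (δ - δ * δ) • ⁅(⁅x, y⁆ : L), φ z⁆ = 0 := by
      rw [sub_smul, e4, sub_self]
    have hne : δ - δ * δ ≠ 0 := by
      intro h
      have : δ * (1 - δ) = 0 := by linear_combination h
      rcases mul_eq_zero.mp this with h' | h'
      · exact hδ0 h'
      · exact hδ1 (by linear_combination -h')
    exact (smul_eq_zero.mp e5).resolve_left hne
  have hbr : ∀ x y : L, φ ⁅x, y⁆ = 0 := by
    intro x y
    apply hZ
    intro z
    rw [swap]
    exact key x y z
  ext x
  simp only [LinearMap.zero_apply]
  apply hZ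
  intro y
  have h := (hφ x y).2
  rw [hbr x y] at h
  exact (smul_right_injective L hδ0 (h.symm.trans (smul_zero δ).symm))
end

section
/- Let A be an associative commutative algebra over a field K and ∂ a derivation of A, and let A∂ be the Lie algebra of derivations of A of the form a∂ with bracket [a∂, b∂] = (a∂(b) − b∂(a))∂. Then for each u ∈ A, the map D_u : a∂ ↦ (ua)∂ is a (1/2)-derivation of A∂. -/
/-- In the Lie algebra `A∂` of derivations of the form `a∂` of an associative
commutative algebra `A`, with bracket `[a∂, b∂] = (a ∂b − b ∂a)∂`, the map
`D_u : a∂ ↦ (u*a)∂` is a (1/2)-derivation, for every `u ∈ A`: stated at the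
level of coefficients of `∂`. -/
theorem mult_is_half_derivation_of_Apartial (K A : Type*) [Field K]
    [CommRing A] [Algebra K A] (h2 : (2 : K) ≠ 0) (d : Derivation K A A)
    (u : A) :
    ∀ a b : A,
      u * (a * d b - b * d a) =
        (2 : K)⁻¹ • ((u * a) * d b - b * d (u * a)) +
        (2 : K)⁻¹ • (a * d (u * b) - (u * b) * d a) := by
  intro a b
  rw [← smul_add]
  have key : ((u * a) * d b - b * d (u * a)) + (a * d (u * b) - (u * b) * d a)
      = (2 : K) • (u * (a * d b - b * d a)) := by
    rw [Derivation.leibniz, Derivation.leibniz, two_smul]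
    simp only [smul_eq_mul]
    ring
  rw [key, smul_smul, inv_mul_cancel₀ h2, one_smul]
end

section
/- Let W_R be a Lie algebra of Witt type over a field K of characteristic ≠ 2,3, with basis {e_α : α ∈ R} and bracket [e_α, e_β] = (β−α)e_{α+β}. For each γ ∈ R with 2γ ∈ R, the linear map D_γ defined by D_γ(e_α) = e_{α+γ} is a (1/2)-derivation of W_R. -/
/-!
Since `γ ∈ R`, `2γ ∈ R` and `R` is closed under sums of distinct elements, `α ↦ α + γ` maps `R`
into itself, and `D_γ` is the linear map it induces on `R →₀ K`. Both sides of the identity are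
bilinear, so it suffices to compare them on basis vectors. If `α + β ∈ R`, the two halves
contribute `β - α - γ` and `β + γ - α` at `e_{α+β+γ}`, averaging to the `β - α` of the left side.
If `α + β ∉ R`, then `α = β`, and the contributions `-γ` and `γ` cancel.
-/

namespace WittType

open Finsupp Set

section

variable {α M : Type*} [Zero M] {s : Set α}

theorem subtypeDomain_single_of_mem {x : α} (hx : x ∈ s) (k : M) :
    (single x k).subtypeDomain (· ∈ s) = single ⟨x, hx⟩ k := by
  ext a
  exact single_apply_left Subtype.val_injective ⟨x, hx⟩ a k

theorem subtypeDomain_single_of_notMem {x : α} (hx : x ∉ s) (k : M) :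
    (single x k).subtypeDomain (· ∈ s) = 0 := by
  ext a
  exact single_eq_of_ne fun h => hx (h ▸ a.2)

theorem dite_smul_single_eq_subtypeDomain {S : Type*} [Semiring S] [DecidablePred (· ∈ s)]
    (x : α) (k : S) :
    (if h : x ∈ s then k • single (⟨x, h⟩ : s) (1 : S) else 0) =
      (single x k).subtypeDomain (· ∈ s) := by
  split_ifs with h
  · rw [subtypeDomain_single_of_mem h, smul_single_one]
  · rw [subtypeDomain_single_of_notMem h]

end

variable {K G : Type*} [Field K] [AddCommGroup G] {R : Set G}

theorem mapsTo_add_right (hR : ∀ α ∈ R, ∀ β ∈ R, α ≠ β → α + β ∈ R) {γ : G} (hγ : γ ∈ R)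
    (h2γ : γ + γ ∈ R) : MapsTo (· + γ) R R := by
  intro a ha
  by_cases haγ : a = γ
  · rwa [haγ]
  · exact hR a ha γ hγ haγ

variable (c : G →+ K)

-- `subtypeDomain` makes this `0` when `a + b ∉ R`.
noncomputable def basisBracket (a b : R) : R →₀ K :=
  (single ((a : G) + b) (c b - c a)).subtypeDomain (· ∈ R)

noncomputable def bracket : (R →₀ K) →ₗ[K] (R →₀ K) →ₗ[K] (R →₀ K) :=
  linearCombination K fun a => linearCombination K (basisBracket c a)

theorem bracket_apply (f g : R →₀ K) :
    bracket c f g = f.sum fun a x => g.sum fun b y => (x * y) • basisBracket c a b := by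
  simp [bracket, linearCombination_apply, LinearMap.finsupp_sum_apply, Finsupp.smul_sum, smul_smul]

theorem bracket_apply_eq_sum_dite [DecidablePred (· ∈ R)] (f g : R →₀ K) :
    bracket c f g = f.sum fun a x => g.sum fun b y =>
      if h : (a : G) + b ∈ R then (x * y * (c b - c a)) • single (⟨a + b, h⟩ : R) 1 else 0 := by
  rw [bracket_apply]
  refine sum_congr fun a _ => sum_congr fun b _ => ?_
  rw [basisBracket, ← dite_smul_single_eq_subtypeDomain, smul_dite, smul_zero]
  simp only [smul_smul]

theorem bracket_single_single (a b : R) :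
    bracket c (single a 1) (single b 1) = basisBracket c a b := by
  simp [bracket]

variable {γ : G} (hγ : MapsTo (· + γ) R R)

def translate (a : R) : R := ⟨a + γ, hγ a.2⟩

theorem lmapDomain_translate_eq_sum_dite [DecidablePred (· ∈ R)] (f : R →₀ K) :
    lmapDomain K K (translate hγ) f =
      f.sum fun a x => if h : (a : G) + γ ∈ R then x • single (⟨a + γ, h⟩ : R) 1 else 0 := by
  rw [lmapDomain_apply, mapDomain]
  refine sum_congr fun a _ => ?_
  rw [dif_pos (hγ a.2), smul_single_one]
  rfl

theorem lmapDomain_subtypeDomain_single {x : G} (hx : x ∈ R) (k : K) :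
    lmapDomain K K (translate hγ) ((single x k).subtypeDomain (· ∈ R)) =
      (single (x + γ) k).subtypeDomain (· ∈ R) := by
  rw [subtypeDomain_single_of_mem hx, lmapDomain_apply, mapDomain_single,
    subtypeDomain_single_of_mem (hγ hx)]
  rfl

theorem lmapDomain_basisBracket (h2 : (2 : K) ≠ 0)
    (hR : ∀ α ∈ R, ∀ β ∈ R, α ≠ β → α + β ∈ R) (a b : R) :
    lmapDomain K K (translate hγ) (basisBracket c a b) =
      (2 : K)⁻¹ • (basisBracket c (translate hγ a) b + basisBracket c a (translate hγ b)) := by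
  have hsum : basisBracket c (translate hγ a) b + basisBracket c a (translate hγ b) =
      (single ((a : G) + b + γ) (2 * (c b - c a))).subtypeDomain (· ∈ R) := by
    have hl : ((translate hγ a : G) + b) = a + b + γ := add_right_comm _ _ _
    have hr : (a : G) + translate hγ b = a + b + γ := (add_assoc _ _ _).symm
    rw [basisBracket, basisBracket, hl, hr, ← subtypeDomain_add, ← single_add]
    congr 2
    simp only [translate, map_add]
    ring
  rw [hsum]
  by_cases hab : (a : G) + b ∈ R
  · rw [basisBracket, lmapDomain_subtypeDomain_single hγ hab,
      subtypeDomain_single_of_mem (hγ hab), subtypeDomain_single_of_mem (hγ hab), smul_single,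
      smul_eq_mul, inv_mul_cancel_left₀ h2]
  · obtain rfl : a = b := by
      by_contra hne
      exact hab (hR a a.2 b b.2 (Subtype.coe_ne_coe.mpr hne))
    simp [basisBracket]

theorem bracket_compr₂_lmapDomain_translate (h2 : (2 : K) ≠ 0)
    (hR : ∀ α ∈ R, ∀ β ∈ R, α ≠ β → α + β ∈ R) :
    (bracket c).compr₂ (lmapDomain K K (translate hγ)) =
      (2 : K)⁻¹ • ((bracket c).comp (lmapDomain K K (translate hγ)) +
        (bracket c).compl₂ (lmapDomain K K (translate hγ))) := by
  ext a b : 4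
  simpa [bracket_single_single] using lmapDomain_basisBracket c hγ h2 hR a b

end WittType

theorem witt_type_Dgamma_is_half_derivation_general (K G : Type*) [Field K]
    [AddCommGroup G] (h2 : (2 : K) ≠ 0)
    (R : Set G) [DecidablePred (· ∈ R)]
    (hR : ∀ α ∈ R, ∀ β ∈ R, α ≠ β → α + β ∈ R)
    (c : G →+ K)
    (e : R → (R →₀ K)) (he : ∀ α : R, e α = Finsupp.single α 1)
    (br : (R →₀ K) → (R →₀ K) → (R →₀ K))
    (hbr : ∀ f g : R →₀ K, br f g =
      f.sum fun α x => g.sum fun β y =>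
        if h : ((α : G) + (β : G)) ∈ R then
          (x * y * (c (β : G) - c (α : G))) • e ⟨(α : G) + (β : G), h⟩
        else 0)
    (γ : G) (hγ : γ ∈ R) (h2γ : γ + γ ∈ R)
    (Dγ : (R →₀ K) → (R →₀ K))
    (hDγ : ∀ f : R →₀ K, Dγ f =
      f.sum fun α x =>
        if h : ((α : G) + γ) ∈ R then x • e ⟨(α : G) + γ, h⟩ else 0) :
    ∀ f g : R →₀ K, Dγ (br f g) = (2 : K)⁻¹ • (br (Dγ f) g + br f (Dγ g)) := by
  obtain rfl : e = fun α => Finsupp.single α 1 := funext he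
  have hmaps := WittType.mapsTo_add_right hR hγ h2γ
  have hbr' : ∀ f g, br f g = WittType.bracket c f g := fun f g =>
    (hbr f g).trans (WittType.bracket_apply_eq_sum_dite c f g).symm
  have hDγ' : ∀ f, Dγ f = Finsupp.lmapDomain K K (WittType.translate hmaps) f := fun f =>
    (hDγ f).trans (WittType.lmapDomain_translate_eq_sum_dite hmaps f).symm
  intro f g
  rw [hDγ', hDγ', hDγ', hbr', hbr', hbr']
  exact LinearMap.congr_fun₂ (WittType.bracket_compr₂_lmapDomain_translate c hmaps h2 hR) f g

/-- In a Lie algebra of Witt type `W_R`, with basis `{e_α : α ∈ R}` and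
bracket `[e_α, e_β] = (β−α) e_{α+β}` (group elements acting as scalars via a
map `c : G → K`), for each `γ ∈ R` with `2γ ∈ R` the map
`D_γ : e_α ↦ e_{α+γ}` is a (1/2)-derivation. -/
theorem witt_type_Dgamma_is_half_derivation (K G : Type*) [Field K]
    [AddCommGroup G] (h2 : (2 : K) ≠ 0) (h3 : (3 : K) ≠ 0)
    (R : Set G) [DecidablePred (· ∈ R)] (h0 : (0 : G) ∈ R)
    (hR : ∀ α ∈ R, ∀ β ∈ R, α ≠ β → α + β ∈ R)
    (c : G →+ K)
    (e : R → (R →₀ K)) (he : ∀ α : R, e α = Finsupp.single α 1)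
    (br : (R →₀ K) → (R →₀ K) → (R →₀ K))
    (hbr : ∀ f g : R →₀ K, br f g =
      f.sum fun α x => g.sum fun β y =>
        if h : ((α : G) + (β : G)) ∈ R then
          (x * y * (c (β : G) - c (α : G))) • e ⟨(α : G) + (β : G), h⟩
        else 0)
    (γ : G) (hγ : γ ∈ R) (h2γ : γ + γ ∈ R)
    (Dγ : (R →₀ K) → (R →₀ K))
    (hDγ : ∀ f : R →₀ K, Dγ f =
      f.sum fun α x =>
        if h : ((α : G) + γ) ∈ R then x • e ⟨(α : G) + γ, h⟩ else 0) :
    ∀ f g : R →₀ K, Dγ (br f g) = (2 : K)⁻¹ • (br (Dγ f) g + br f (Dγ g)) :=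
  witt_type_Dgamma_is_half_derivation_general K G h2 R hR c e he br hbr γ hγ h2γ Dγ hDγ
end

section
/- The space of (1/2)-derivations of the Witt algebra W_1(1) over a field of characteristic p > 3 is a commutative associative algebra isomorphic to K[x]/(x^p); in particular, it contains nonzero nilpotent elements (divisors of zero). -/
/-!
Write `τ_a` for the shift `e_i ↦ e_{i-a}` of the basis `e_i = single i 1`, `i ∈ ZMod p`. Since
`[τ_a e_i, e_j] + [e_i, τ_a e_j] = ((j - i + a) + (j - i - a)) e_{i+j-a} = 2 τ_a [e_i, e_j]`, every
shift is a `½`-derivation. Conversely, the coefficient of `e_{i+j-k}` in the `½`-derivation identity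
for `(e_i, e_j)` shows that the coefficient of `e_{j-k}` in `T e_j` does not depend on `j`: the pair
`(0, j)` settles `j ≠ -k`, and the pair `(-2k, k)` the case `j = -k`, after dividing by `6k`. Hence
`T = ∑ₐ cₐ τ_a`, so the `½`-derivations form the algebra generated by `τ_1`, or equivalently by
`N = τ_1 - 1`. In characteristic `p` we have `N ^ (p - 1) = ∑_{i<p} τ_1 ^ i ≠ 0` and
`N ^ p = τ_1 ^ p - 1 = 0`, so the minimal polynomial of `N` is `X ^ p` and `K[N] ≅ K[X]/(X ^ p)`.
-/

open Polynomial Finsupp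

section DeltaDerivations

variable {R M : Type*} [CommSemiring R] [AddCommMonoid M] [Module R M]

def deltaDerivations (B : M →ₗ[R] M →ₗ[R] M) (δ : R) : Submodule R (Module.End R M) where
  carrier := {T | ∀ f g, T (B f g) = δ • (B (T f) g + B f (T g))}
  zero_mem' f g := by simp
  add_mem' {T₁ T₂} h₁ h₂ f g := by
    simp only [LinearMap.add_apply, map_add, h₁ f g, h₂ f g]
    module
  smul_mem' a T hT f g := by
    simp only [LinearMap.smul_apply, map_smul, hT f g]
    module

variable {B : M →ₗ[R] M →ₗ[R] M} {δ : R} {T : Module.End R M}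

theorem mem_deltaDerivations_of_basis {ι : Type*} (b : Module.Basis ι R M)
    (h : ∀ i j, T (B (b i) (b j)) = δ • (B (T (b i)) (b j) + B (b i) (T (b j)))) :
    T ∈ deltaDerivations B δ := by
  have hB : B.compr₂ T = δ • (B ∘ₗ T + B.compl₂ T) :=
    LinearMap.ext_basis b b fun i j => by simpa using h i j
  intro f g
  simpa using LinearMap.congr_fun₂ hB f g

end DeltaDerivations

theorem Polynomial.X_sub_one_pow_pred_eq_sum (R : Type*) [CommRing R] [IsDomain R] (p : ℕ)
    [Fact p.Prime] [CharP R p] :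
    (X - 1 : R[X]) ^ (p - 1) = ∑ i ∈ Finset.range p, X ^ i := by
  refine mul_left_cancel₀ (by simpa using X_sub_C_ne_zero (1 : R)) ?_
  rw [← pow_succ', Nat.sub_add_cancel (Fact.out : p.Prime).one_le, mul_geom_sum, sub_pow_char,
    one_pow]

theorem Polynomial.ker_aeval_eq_span_X_pow {K A : Type*} [Field K] [Ring A] [Algebra K A] {x : A}
    {n : ℕ} (hn : x ^ n = 0) (hn' : x ^ (n - 1) ≠ 0) :
    RingHom.ker (aeval x) = Ideal.span {(X : K[X]) ^ n} := by
  have hroot : aeval x (X ^ n : K[X]) = 0 := by simpa using hn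
  have hint : IsIntegral K x := ⟨X ^ n, monic_X_pow n, hroot⟩
  obtain ⟨i, hin, hassoc⟩ := (dvd_prime_pow prime_X n).1 (minpoly.dvd K x hroot)
  have hmin : minpoly K x = X ^ i :=
    eq_of_monic_of_associated (minpoly.monic hint) (monic_X_pow i) hassoc
  have hi : x ^ i = 0 := by simpa [hmin] using minpoly.aeval K x
  obtain rfl : i = n := by
    by_contra hne
    exact hn' (pow_eq_zero_of_le (by omega) hi)
  rw [minpoly.ker_aeval_eq_span_minpoly, hmin]

theorem sub_one_pow_pred_eq_geom_sum {K A : Type*} [Field K] [Ring A] [Algebra K A] (p : ℕ)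
    [Fact p.Prime] [CharP K p] (x : A) : (x - 1) ^ (p - 1) = ∑ i ∈ Finset.range p, x ^ i := by
  simpa using congr(aeval x $(X_sub_one_pow_pred_eq_sum K p))

theorem sub_one_pow_char_eq_zero {K A : Type*} [Field K] [Ring A] [Algebra K A] (p : ℕ)
    [Fact p.Prime] [CharP K p] {x : A} (hx : x ^ p = 1) : (x - 1) ^ p = 0 := by
  rw [← mul_pow_sub_one (Fact.out : p.Prime).ne_zero, sub_one_pow_pred_eq_geom_sum (K := K),
    mul_geom_sum, hx, sub_self]

theorem Algebra.adjoin_singleton_sub_one {R A : Type*} [CommRing R] [Ring A] [Algebra R A]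
    (x : A) : Algebra.adjoin R {x - 1} = Algebra.adjoin R {x} := by
  refine le_antisymm (adjoin_singleton_le (sub_mem (self_mem_adjoin_singleton R x) (one_mem _)))
    (adjoin_singleton_le ?_)
  simpa using add_mem (self_mem_adjoin_singleton R (x - 1)) (one_mem _)

namespace Finsupp

variable (K : Type*) [Semiring K] {G : Type*} [AddCommGroup G]

noncomputable def shift (a : G) : Module.End K (G →₀ K) :=
  lmapDomain K K (· - a)

theorem shift_single (a i : G) (x : K) : shift K a (single i x) = single (i - a) x :=
  mapDomain_single

theorem shift_zero : shift K (0 : G) = 1 := by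
  refine lhom_ext fun i x => ?_
  simp [shift_single]

theorem shift_mul_shift (a b : G) : shift K a * shift K b = shift K (a + b) := by
  refine lhom_ext fun i x => ?_
  simp [shift_single, sub_sub, add_comm]

theorem shift_pow (a : G) (n : ℕ) : shift K a ^ n = shift K (n • a) := by
  induction n with
  | zero => simp [shift_zero]
  | succ n ih => rw [pow_succ, ih, shift_mul_shift, succ_nsmul]

theorem shift_one_pow_card (n : ℕ) : shift K (1 : ZMod n) ^ n = 1 := by
  rw [shift_pow, nsmul_one, ZMod.natCast_self, shift_zero]

theorem sum_pow_shift_one_ne_zero [Nontrivial K] (n : ℕ) [NeZero n] :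
    ∑ i ∈ Finset.range n, shift K (1 : ZMod n) ^ i ≠ 0 := by
  intro h
  have h0 := congr($h (single 0 1) 0)
  rw [LinearMap.sum_apply, finsetSum_apply, Finset.sum_eq_single 0] at h0
  · simp at h0
  · intro i hi hi0
    rw [shift_pow, shift_single, single_apply, if_neg]
    rw [nsmul_one, zero_sub, neg_eq_zero, ZMod.natCast_eq_zero_iff]
    exact Nat.not_dvd_of_pos_of_lt (Nat.pos_of_ne_zero hi0) (Finset.mem_range.1 hi)
  · simp [NeZero.pos n]

end Finsupp

namespace WittAlgebra

variable (K : Type*) [Field K] (p : ℕ) [CharP K p]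

local notation "χ" => ZMod.castHom (dvd_refl p) K

/-- The Witt algebra `W₁(1)`: `[e_i, e_j] = (j - i) e_{i+j}` for `e_i = single i 1`. -/
noncomputable def bracket : (ZMod p →₀ K) →ₗ[K] (ZMod p →₀ K) →ₗ[K] (ZMod p →₀ K) :=
  linearCombination K fun i => linearCombination K fun j => χ (j - i) • single (i + j) (1 : K)

variable {K p}

theorem bracket_apply (f g : ZMod p →₀ K) :
    bracket K p f g = f.sum fun i x => g.sum fun j y => (x * y * χ (j - i)) • single (i + j) 1 := by
  simp only [bracket, linearCombination_apply, LinearMap.finsupp_sum_apply, LinearMap.smul_apply,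
    smul_sum, smul_smul, mul_assoc]

theorem bracket_single_single (i j : ZMod p) :
    bracket K p (single i 1) (single j 1) = χ (j - i) • single (i + j) 1 := by
  simp [bracket]

theorem bracket_single_right_apply (f : ZMod p →₀ K) (j m : ZMod p) :
    bracket K p f (single j 1) m = χ (j - (m - j)) * f (m - j) := by
  induction f using Finsupp.induction_linear with
  | zero => simp
  | add f g hf hg => simp [hf, hg, mul_add]
  | single i a =>
    simp only [bracket, linearCombination_single, LinearMap.smul_apply, one_smul,
      Finsupp.smul_apply, single_apply, eq_sub_iff_add_eq, smul_eq_mul]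
    split_ifs with h
    · subst h; simp [mul_comm]
    · simp

theorem bracket_single_left_apply (g : ZMod p →₀ K) (i m : ZMod p) :
    bracket K p (single i 1) g m = χ (m - i - i) * g (m - i) := by
  induction g using Finsupp.induction_linear with
  | zero => simp
  | add f g hf hg => simp [hf, hg, mul_add]
  | single j a =>
    simp only [bracket, linearCombination_single, one_smul,
      Finsupp.smul_apply, single_apply, eq_sub_iff_add_eq, smul_eq_mul, add_comm j]
    split_ifs with h
    · subst h; simp [mul_comm]
    · simp

variable {T : Module.End K (ZMod p →₀ K)}

theorem apply_single_add_relation {δ : K} (hT : T ∈ deltaDerivations (bracket K p) δ)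
    (i j k : ZMod p) :
    χ (j - i) * T (single (i + j) 1) (i + j - k) =
      δ * (χ (j - i + k) * T (single i 1) (i - k) + χ (j - i - k) * T (single j 1) (j - k)) := by
  have h := congr($(hT (single i 1) (single j 1)) (i + j - k))
  simp only [bracket_single_single, map_smul, Finsupp.smul_apply, Finsupp.add_apply, smul_eq_mul,
    bracket_single_right_apply, bracket_single_left_apply] at h
  rwa [show i + j - k - j = i - k by ring, show i + j - k - i = j - k by ring,
    show j - (i - k) = j - i + k by ring, show j - k - i = j - i - k by ring] at h

variable [Fact p.Prime]

theorem apply_single_sub_eq (h2 : (2 : K) ≠ 0) (h3 : (3 : K) ≠ 0)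
    (hT : T ∈ deltaDerivations (bracket K p) (2 : K)⁻¹) (j k : ZMod p) :
    T (single j 1) (j - k) = T (single 0 1) (-k) := by
  have hχ : ∀ z : ZMod p, z ≠ 0 → χ z ≠ 0 := fun z hz => (_root_.map_ne_zero _).2 hz
  have h22 : (2 : K) * 2⁻¹ = 1 := mul_inv_cancel₀ h2
  have of_add_ne_zero : ∀ j, j + k ≠ 0 → T (single j 1) (j - k) = T (single 0 1) (-k) := by
    intro j hjk
    have h := apply_single_add_relation hT 0 j k
    simp only [zero_add, sub_zero, zero_sub, map_add, map_sub] at h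
    refine mul_left_cancel₀ (map_add χ j k ▸ hχ _ hjk) ?_
    linear_combination 2 * h +
      ((χ j + χ k) * T (single 0 1) (-k) + (χ j - χ k) * T (single j 1) (j - k)) * h22
  by_cases hjk : j + k = 0
  · obtain rfl := eq_neg_of_add_eq_zero_left hjk
    rcases eq_or_ne k 0 with rfl | hk
    · simp
    have h := apply_single_add_relation hT (-(2 * k)) k k
    have hk2 : -(2 * k) + k = -k := by ring
    rw [hk2, of_add_ne_zero (-(2 * k)) (hk2 ▸ neg_ne_zero.2 hk),
      of_add_ne_zero k fun h0 => mul_ne_zero h2 (hχ k hk) (by simpa [two_mul] using congr(χ $h0))]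
      at h
    simp only [map_sub, map_add, map_neg, map_mul, map_ofNat] at h
    refine mul_left_cancel₀ (mul_ne_zero h3 (hχ k hk)) ?_
    linear_combination h + 3 * χ k * T (single 0 1) (-k) * h22
  · exact of_add_ne_zero j hjk

theorem eq_sum_smul_shift (h2 : (2 : K) ≠ 0) (h3 : (3 : K) ≠ 0)
    (hT : T ∈ deltaDerivations (bracket K p) (2 : K)⁻¹) :
    T = ∑ a : ZMod p, T (single 0 1) (-a) • shift K a := by
  refine Finsupp.basisSingleOne.ext fun j => Finsupp.ext fun m => ?_
  have hcond : ∀ a : ZMod p, j - a = m ↔ j - m = a := fun a => by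
    constructor <;> rintro rfl <;> ring
  simp only [coe_basisSingleOne, LinearMap.sum_apply, LinearMap.smul_apply, shift_single,
    finsetSum_apply, Finsupp.smul_apply, single_apply, hcond, smul_eq_mul, mul_ite, mul_one,
    mul_zero, Finset.sum_ite_eq, Finset.mem_univ, if_true]
  simpa using apply_single_sub_eq h2 h3 hT j (j - m)

theorem shift_mem_deltaDerivations (h2 : (2 : K) ≠ 0) (a : ZMod p) :
    shift K a ∈ deltaDerivations (bracket K p) (2 : K)⁻¹ := by
  refine mem_deltaDerivations_of_basis Finsupp.basisSingleOne fun i j => ?_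
  simp only [coe_basisSingleOne, bracket_single_single, map_smul, shift_single]
  rw [show i - a + j = i + j - a by ring, show i + (j - a) = i + j - a by ring, ← add_smul,
    smul_smul]
  congr 1
  simp only [map_sub]
  field_simp
  ring

theorem mem_adjoin_shift_one_iff (h2 : (2 : K) ≠ 0) (h3 : (3 : K) ≠ 0) :
    T ∈ Algebra.adjoin K {shift K (1 : ZMod p)} ↔
      T ∈ deltaDerivations (bracket K p) (2 : K)⁻¹ := by
  constructor
  · intro hT
    rw [Algebra.adjoin_singleton_eq_range_aeval] at hT
    obtain ⟨P, rfl⟩ := (AlgHom.mem_range _).1 hT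
    clear hT
    induction P using Polynomial.induction_on' with
    | add P Q hP hQ => rw [map_add]; exact add_mem hP hQ
    | monomial n x =>
      rw [aeval_monomial, ← Algebra.smul_def, shift_pow]
      exact Submodule.smul_mem _ x (shift_mem_deltaDerivations h2 _)
  · intro hT
    rw [eq_sum_smul_shift h2 h3 hT]
    refine Subalgebra.sum_mem _ fun a _ => Subalgebra.smul_mem _ ?_ _
    rw [← ZMod.natCast_zmod_val a, ← nsmul_one, ← shift_pow]
    exact pow_mem (Algebra.self_mem_adjoin_singleton K _) _

end WittAlgebra

/-- The (1/2)-derivations of the Witt algebra `W_1(1)` over a field of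
characteristic `p > 3` form a commutative associative algebra isomorphic to
`K[x]/(x^p)`; in particular, it contains nonzero nilpotent elements. -/
theorem half_derivations_of_Witt_algebra (K : Type*) [Field K] (p : ℕ)
    [Fact p.Prime] [CharP K p] (hp : 3 < p)
    (e : ZMod p → (ZMod p →₀ K)) (he : ∀ i, e i = Finsupp.single i 1)
    (br : (ZMod p →₀ K) → (ZMod p →₀ K) → (ZMod p →₀ K))
    (hbr : ∀ f g : ZMod p →₀ K, br f g =
      f.sum fun i x => g.sum fun j y =>
        (x * y * (ZMod.castHom (dvd_refl p) K (j - i))) • e (i + j)) :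
    ∃ S : Subalgebra K (Module.End K (ZMod p →₀ K)),
      (∀ D : Module.End K (ZMod p →₀ K),
        D ∈ S ↔ ∀ f g, D (br f g) = (2 : K)⁻¹ • (br (D f) g + br f (D g))) ∧
      Nonempty (S ≃ₐ[K] (Polynomial K ⧸ (Ideal.span {Polynomial.X ^ p} : Ideal (Polynomial K)))) ∧
      ∃ D : Module.End K (ZMod p →₀ K),
        (∀ f g, D (br f g) = (2 : K)⁻¹ • (br (D f) g + br f (D g))) ∧
        D ≠ 0 ∧ IsNilpotent D := by
  have hcast : ∀ n : ℕ, 0 < n → n < p → (n : K) ≠ 0 := fun n h0 hn =>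
    (CharP.cast_eq_zero_iff K p n).not.mpr (Nat.not_dvd_of_pos_of_lt h0 hn)
  have h2 : (2 : K) ≠ 0 := by exact_mod_cast hcast 2 (by norm_num) (by omega)
  have h3 : (3 : K) ≠ 0 := by exact_mod_cast hcast 3 (by norm_num) (by omega)
  have hW : ∀ f g, br f g = WittAlgebra.bracket K p f g := fun f g => by
    simp only [hbr, he, WittAlgebra.bracket_apply]
  simp only [hW]
  set τ := shift K (1 : ZMod p)
  -- `x := τ` is given explicitly: the ring structure of `Module.End K (ZMod p →₀ K)` agrees with
  -- the one `τ - 1` is elaborated in only up to unfolding the `Finsupp` group instance.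
  have hN : (τ - 1) ^ p = 0 :=
    sub_one_pow_char_eq_zero (K := K) (x := τ) p (shift_one_pow_card K p)
  have hN' : (τ - 1) ^ (p - 1) ≠ 0 :=
    (sub_one_pow_pred_eq_geom_sum (K := K) p τ).trans_ne (sum_pow_shift_one_ne_zero K p)
  have hmem (T) : T ∈ Algebra.adjoin K {τ - 1} ↔
      T ∈ deltaDerivations (WittAlgebra.bracket K p) (2 : K)⁻¹ :=
    (SetLike.ext_iff.1 (Algebra.adjoin_singleton_sub_one τ) T).trans
      (WittAlgebra.mem_adjoin_shift_one_iff h2 h3)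
  have hker := ker_aeval_eq_span_X_pow (K := K) (x := τ - 1) hN hN'
  refine ⟨Algebra.adjoin K {τ - 1}, hmem,
    ⟨(Subalgebra.equivOfEq _ _ (Algebra.adjoin_singleton_eq_range_aeval K (τ - 1))).trans
      ((Ideal.quotientKerEquivRange (aeval (τ - 1))).symm.trans
        (Ideal.quotientEquivAlgOfEq K hker))⟩,
    τ - 1, (hmem _).1 (Algebra.self_mem_adjoin_singleton K _), fun h0 => hN' ?_, p, hN⟩
  rw [h0, zero_pow (by omega)]
end

section
/- Let W_R be a Lie algebra of Witt type with at least three basis elements, over a field of characteristic ≠ 2,3. Every (1/2)-derivation of W_R that is homogeneous of degree γ with γ ∉ R (i.e., maps each e_α into Ke_{α+γ} when α+γ ∈ R and to 0 otherwise) is zero. -/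
/-- In a Lie algebra of Witt type `W_R` with at least three basis elements,
over a field of characteristic `≠ 2, 3`, every (1/2)-derivation that is
homogeneous of degree `γ ∉ R` is zero. -/
theorem witt_type_homogeneous_half_derivation_zero (K G : Type*) [Field K]
    [AddCommGroup G] (h2 : (2 : K) ≠ 0) (h3 : (3 : K) ≠ 0)
    (R : Set G) [DecidablePred (· ∈ R)] (h0 : (0 : G) ∈ R)
    (hR : ∀ α ∈ R, ∀ β ∈ R, α ≠ β → α + β ∈ R)
    (c : G →+ K) (hc : Function.Injective c)
    (hcard : ∃ α β η : G, α ∈ R ∧ β ∈ R ∧ η ∈ R ∧ α ≠ β ∧ α ≠ η ∧ β ≠ η)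
    (e : R → (R →₀ K)) (he : ∀ α : R, e α = Finsupp.single α 1)
    (br : (R →₀ K) → (R →₀ K) → (R →₀ K))
    (hbr : ∀ f g : R →₀ K, br f g =
      f.sum fun α x => g.sum fun β y =>
        if h : ((α : G) + (β : G)) ∈ R then
          (x * y * (c (β : G) - c (α : G))) • e ⟨(α : G) + (β : G), h⟩
        else 0)
    (γ : G) (hγ : γ ∉ R)
    (D : (R →₀ K) →ₗ[K] (R →₀ K))
    (hhom : ∀ α : R, ∃ t : K,
      D (e α) = if h : ((α : G) + γ) ∈ R then t • e ⟨(α : G) + γ, h⟩ else 0)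
    (hD : ∀ f g : R →₀ K, D (br f g) = (2 : K)⁻¹ • (br (D f) g + br f (D g))) :
    D = 0 := by
  classical
  -- br on singles
  have br_single : ∀ (α β : R) (x y : K),
      br (Finsupp.single α x) (Finsupp.single β y) =
        if h : ((α : G) + (β : G)) ∈ R then
          (x * y * (c (β : G) - c (α : G))) • e ⟨(α : G) + (β : G), h⟩
        else 0 := by
    intro α β x y
    rw [hbr]
    rw [Finsupp.sum_single_index, Finsupp.sum_single_index]
    · split <;> simp
    · rw [Finsupp.sum_single_index] <;> split <;> simp
  have br_zero : ∀ f : R →₀ K, br f 0 = 0 := by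
    intro f; rw [hbr]; simp [Finsupp.sum]
  -- D (e 0) = 0
  have hD0 : D (e ⟨0, h0⟩) = 0 := by
    obtain ⟨t, ht⟩ := hhom ⟨0, h0⟩
    rw [ht, dif_neg]
    simpa using hγ
  -- main claim: D (e α) = 0 for all α
  have key : ∀ α : R, D (e α) = 0 := by
    intro α
    obtain ⟨t, ht⟩ := hhom α
    by_cases hα : ((α : G) + γ) ∈ R
    · rw [dif_pos hα] at ht
      set p : R := ⟨(α : G) + γ, hα⟩ with hp
      -- use hD on e α, e 0
      have hz : (⟨0, h0⟩ : R) ≠ α := by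
        rintro rfl
        exact hγ (by simpa using hα)
      have e1 : br (e α) (e ⟨0, h0⟩) = (-(c (α : G))) • e α := by
        rw [he α, he ⟨0, h0⟩, br_single, dif_pos (by simpa using α.2)]
        have hs : (⟨(α : G) + ((⟨0, h0⟩ : R) : G), by simpa using α.2⟩ : R) = α :=
          Subtype.ext (by simp)
        rw [hs]
        congr 1
        · simp
        · exact he α
      have e2 : br (t • e p) (e ⟨0, h0⟩) = (-(t * c ((α : G) + γ))) • e p := by
        rw [he p, he ⟨0, h0⟩, Finsupp.smul_single, smul_eq_mul, mul_one,
          br_single, dif_pos (by simpa using hα)]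
        have hs : (⟨(p : G) + ((⟨0, h0⟩ : R) : G), by simpa using hα⟩ : R) = p :=
          Subtype.ext (by simp)
        rw [hs]
        congr 1
        · simp [hp]; ring
        · exact he p
      have main := hD (e α) (e ⟨0, h0⟩)
      rw [e1, map_smul, ht, hD0, br_zero, add_zero, e2, smul_smul, smul_smul] at main
      -- main : (-(c α) * t) • e p = (2⁻¹ * -(t * c (α+γ))) • e p
      have coeff : (-(c (α : G)) * t) = (2 : K)⁻¹ * (-(t * c ((α : G) + γ))) := by
        have := congrArg (fun f => f p) main
        simpa [he p, Finsupp.single_apply] using this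
      have hne : c (α : G) - c γ ≠ 0 := by
        intro h
        exact hγ (by simpa [hc (sub_eq_zero.mp h)] using α.2)
      have : t * (c (α : G) - c γ) = 0 := by
        have coeff2 : (2 : K) * (-(c (α : G)) * t) = -(t * c ((α : G) + γ)) := by
          rw [coeff, ← mul_assoc, mul_inv_cancel₀ h2, one_mul]
        rw [map_add] at coeff2
        linear_combination -coeff2
      have ht0 : t = 0 := by
        rcases mul_eq_zero.mp this with h | h
        · exact h
        · exact absurd h hne
      rw [ht, ht0, zero_smul]
    · rw [dif_neg hα] at ht
      exact ht
  -- conclude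
  apply Finsupp.lhom_ext
  intro a b
  have hs : Finsupp.single a b = b • e a := by
    rw [he a, Finsupp.smul_single, smul_eq_mul, mul_one]
  rw [hs, map_smul, key a, smul_zero, LinearMap.zero_apply]
end

section
/- Let L be a Lie algebra over an algebraically closed field, δ ∈ K, and D a δ-derivation of L. If x ∈ L is an eigenvector of D with eigenvalue λ and y ∈ L is an eigenvector with eigenvalue μ, then (D − δ(λ+μ))^n ([x,y]) = 0 for sufficiently large n; more precisely, the generalized eigenspace bracket rule [L_λ, L_μ] ⊆ L_{δ(λ+μ)} holds for the generalized eigenspace decomposition with respect to D. -/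
/-!
Shifting `D` by the expected eigenvalues turns the δ-derivation rule into a Leibniz rule:
`(D - δ(λ+μ)) ⁅x, y⁆ = ⁅δ(D - λ) x, y⁆ + ⁅x, δ(D - μ) y⁆`. The general Leibniz formula then
expands `(D - δ(λ+μ))^n ⁅x, y⁆` into brackets `⁅(δ(D - λ))^i x, (δ(D - μ))^j y⁆` with `i + j = n`,
all of which vanish once `n` is large enough for `x` and `y`.
-/

open Finset

namespace LinearMap

variable {R M₁ M₂ M₃ : Type*} [CommSemiring R] [AddCommMonoid M₁] [AddCommMonoid M₂]
  [AddCommMonoid M₃] [Module R M₁] [Module R M₂] [Module R M₃]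
  {β : M₁ →ₗ[R] M₂ →ₗ[R] M₃} {f₁ : Module.End R M₁} {f₂ : Module.End R M₂}
  {f₃ : Module.End R M₃}

theorem pow_apply_eq_sum_antidiagonal_of_leibniz
    (h : ∀ x y, f₃ (β x y) = β (f₁ x) y + β x (f₂ y)) (n : ℕ) (x : M₁) (y : M₂) :
    (f₃ ^ n) (β x y) =
      ∑ ij ∈ antidiagonal n, n.choose ij.1 • β ((f₁ ^ ij.1) x) ((f₂ ^ ij.2) y) := by
  induction n with
  | zero => simp
  | succ n ih =>
    rw [sum_antidiagonal_choose_succ_nsmul (M := M₃)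
      (fun i j => β ((f₁ ^ i) x) ((f₂ ^ j) y)) n]
    simp only [pow_succ', Module.End.mul_apply, ih, map_sum, map_nsmul, h, smul_add,
      sum_add_distrib]
    rw [add_comm]
    congr 1
    refine sum_congr rfl fun ⟨i, j⟩ hij ↦ ?_
    rw [n.choose_symm_of_eq_add (mem_antidiagonal.1 hij).symm]

theorem pow_apply_eq_zero_of_leibniz
    (h : ∀ x y, f₃ (β x y) = β (f₁ x) y + β x (f₂ y)) {p q : ℕ} {x : M₁} {y : M₂}
    (hx : (f₁ ^ p) x = 0) (hy : (f₂ ^ q) y = 0) :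
    (f₃ ^ (p + q - 1)) (β x y) = 0 := by
  rw [pow_apply_eq_sum_antidiagonal_of_leibniz h]
  refine sum_eq_zero fun ⟨i, j⟩ hij ↦ ?_
  rcases Nat.le_or_le_of_add_eq_add_pred (mem_antidiagonal.1 hij) with hi | hj
  · simp [Module.End.pow_map_zero_of_le hi hx]
  · simp [Module.End.pow_map_zero_of_le hj hy]

end LinearMap

namespace Module.End

variable {K L : Type*} [Field K] [LieRing L] [LieAlgebra K L]

def IsDeltaDerivation (δ : K) (D : Module.End K L) : Prop :=
  ∀ x y : L, D ⁅x, y⁆ = δ • ⁅D x, y⁆ + δ • ⁅x, D y⁆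

variable {δ : K} {D : Module.End K L}

theorem IsDeltaDerivation.sub_smul_one_apply_lie (hD : D.IsDeltaDerivation δ) (lam mu : K)
    (x y : L) :
    (D - (δ * (lam + mu)) • 1) ⁅x, y⁆ =
      ⁅(δ • (D - lam • 1)) x, y⁆ + ⁅x, (δ • (D - mu • 1)) y⁆ := by
  simp only [LinearMap.sub_apply, LinearMap.smul_apply, one_apply, hD x y, sub_lie,
    lie_sub, smul_lie, lie_smul, smul_sub, smul_smul]
  module

theorem IsDeltaDerivation.lie_mem_maxGenEigenspace (hD : D.IsDeltaDerivation δ)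
    {lam mu : K} {x y : L}
    (hx : x ∈ D.maxGenEigenspace lam) (hy : y ∈ D.maxGenEigenspace mu) :
    ⁅x, y⁆ ∈ D.maxGenEigenspace (δ * (lam + mu)) := by
  rw [mem_maxGenEigenspace] at hx hy ⊢
  obtain ⟨p, hp⟩ := hx
  obtain ⟨q, hq⟩ := hy
  have hδp : ((δ • (D - lam • 1)) ^ p) x = 0 := by simp [smul_pow, hp]
  have hδq : ((δ • (D - mu • 1)) ^ q) y = 0 := by simp [smul_pow, hq]
  let bracket : L →ₗ[K] Module.End K L := LieAlgebra.ad K L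
  exact ⟨p + q - 1, LinearMap.pow_apply_eq_zero_of_leibniz (β := bracket)
    (hD.sub_smul_one_apply_lie lam mu) hδp hδq⟩

end Module.End

theorem delta_derivation_genEigenspace_bracket_general (K L : Type*) [Field K]
    [LieRing L] [LieAlgebra K L]
    (δ : K) (D : Module.End K L)
    (hD : ∀ x y : L, D ⁅x, y⁆ = δ • ⁅D x, y⁆ + δ • ⁅x, D y⁆) :
    (∀ (lam mu : K) (x y : L), x ∈ D.maxGenEigenspace lam →
      y ∈ D.maxGenEigenspace mu →
      ⁅x, y⁆ ∈ D.maxGenEigenspace (δ * (lam + mu))) ∧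
    (∀ (lam mu : K) (x y : L), D x = lam • x → D y = mu • y →
      ∃ n : ℕ, ((D - (δ * (lam + mu)) • (1 : Module.End K L)) ^ n) ⁅x, y⁆ = 0) := by
  have bracket_mem (lam mu : K) (x y : L) (hx : x ∈ D.maxGenEigenspace lam)
      (hy : y ∈ D.maxGenEigenspace mu) : ⁅x, y⁆ ∈ D.maxGenEigenspace (δ * (lam + mu)) :=
    Module.End.IsDeltaDerivation.lie_mem_maxGenEigenspace hD hx hy
  have eigen_mem {v : L} {ν : K} (hv : D v = ν • v) : v ∈ D.maxGenEigenspace ν :=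
    Module.End.eigenspace_le_maxGenEigenspace (Module.End.mem_eigenspace_iff.2 hv)
  refine ⟨bracket_mem, fun lam mu x y hx hy ↦ ?_⟩
  exact (Module.End.mem_maxGenEigenspace _ _ _).1
    (bracket_mem lam mu x y (eigen_mem hx) (eigen_mem hy))

/-- For a δ-derivation `D` of a finite-dimensional Lie algebra over an
algebraically closed field, the generalized eigenspaces of `D` satisfy
`⁅L_λ, L_μ⁆ ⊆ L_{δ(λ+μ)}`; in particular, if `x`, `y` are eigenvectors of `D`
with eigenvalues `λ`, `μ`, then `(D − δ(λ+μ))^n ⁅x,y⁆ = 0` for some `n`. -/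
theorem delta_derivation_genEigenspace_bracket (K L : Type*) [Field K]
    [IsAlgClosed K] [LieRing L] [LieAlgebra K L] [FiniteDimensional K L]
    (δ : K) (D : Module.End K L)
    (hD : ∀ x y : L, D ⁅x, y⁆ = δ • ⁅D x, y⁆ + δ • ⁅x, D y⁆) :
    (∀ (lam mu : K) (x y : L), x ∈ D.maxGenEigenspace lam →
      y ∈ D.maxGenEigenspace mu →
      ⁅x, y⁆ ∈ D.maxGenEigenspace (δ * (lam + mu))) ∧
    (∀ (lam mu : K) (x y : L), D x = lam • x → D y = mu • y →
      ∃ n : ℕ, ((D - (δ * (lam + mu)) • (1 : Module.End K L)) ^ n) ⁅x, y⁆ = 0) :=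
  delta_derivation_genEigenspace_bracket_general K L δ D hD
end

section
/- For a non-nilpotent δ-derivation D of a finite-dimensional perfect complex Lie algebra L, one has 1/2 ≤ |δ| ≤ 1. -/
/-!
Let `L_c` be the generalized eigenspaces of `D`. A δ-derivation satisfies
`⁅L_a, L_b⁆ ⊆ L_{δ(a+b)}`, and since `L` is perfect every `L_c` is spanned by brackets
`⁅L_p, L_q⁆` with `δ(p+q) = c`. Taking `c ≠ 0` of maximal norm among the eigenvalues gives
`‖c‖ ≤ ‖δ‖ (‖p‖ + ‖q‖) ≤ 2 ‖δ‖ ‖c‖`, so `‖δ‖ ≥ 1/2`.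

For the upper bound suppose `‖δ‖ > 1`. Applying `D` to the Jacobi identity shows that, for
`a ∉ {0, p, q}`, `⁅L_a, ⁅L_p, L_q⁆⁆ = 0`; with perfectness this turns `⁅L_a, L_b⁆ ≠ 0` (`a ≠ 0`)
into `⁅L_a, L_{b/δ - a}⁆ ≠ 0`. The map `b ↦ b/δ - a` is a contraction towards `-δa/(δ-1)`
and there are finitely many eigenvalues, so `⁅L_a, L_b⁆ ≠ 0` forces `δa + (δ-1)b = 0`. A nonzero
bracket `⁅L_p, L_q⁆` exists with `p ≠ 0`; the relation then holds in both directions and yields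
`δ = 1/2`, a contradiction.
-/

open Set

theorem iSupIndep.le_of_forall_le_of_le_iSup {α ι : Type*} [CompleteLattice α]
    [IsModularLattice α] {E N : ι → α} (hE : iSupIndep E) (hNE : ∀ i, N i ≤ E i) {i : ι}
    (hi : E i ≤ ⨆ j, N j) : E i ≤ N i := by
  have hrest : (⨆ (j) (_ : j ≠ i), N j) ⊓ E i = ⊥ :=
    ((hE i).symm.mono_left (iSup₂_mono fun j _ ↦ hNE j)).eq_bot
  apply le_of_eq
  calc E i = (N i ⊔ ⨆ (j) (_ : j ≠ i), N j) ⊓ E i := by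
        rw [← iSup_split_single, inf_eq_right.mpr hi]
    _ = N i := by rw [sup_inf_assoc_of_le _ (hNE i), hrest, sup_bot_eq]

theorem Set.Finite.subset_singleton_of_dist_map_eq_mul {X : Type*} [MetricSpace X] {S : Set X}
    (hS : S.Finite) {T : X → X} (hT : MapsTo T S S) {β : X} {r : ℝ} (hr0 : 0 < r) (hr1 : r < 1)
    (hdist : ∀ x, dist (T x) β = r * dist x β) : S ⊆ {β} := by
  by_contra hne
  obtain ⟨x, ⟨hxS, hxβ⟩, hmin⟩ := exists_min_image _ (dist · β) (hS.sdiff (t := {β}))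
    (sdiff_nonempty.mpr hne)
  have hpos : 0 < dist x β := dist_pos.mpr hxβ
  have hTx : T x ≠ β := fun h ↦ by
    have := hdist x
    rw [h, dist_self] at this
    nlinarith
  have := hmin (T x) ⟨hT hxS, hTx⟩
  rw [hdist] at this
  nlinarith

namespace Module.End

variable {K V : Type*} [Field K] [AddCommGroup V] [Module K V]

theorem eq_zero_of_add_add_eq_zero_of_mem_maxGenEigenspace (f : End K V) {μ ν ρ : K}
    (hν : ν ≠ μ) (hρ : ρ ≠ μ) {x y z : V} (hx : x ∈ f.maxGenEigenspace μ)
    (hy : y ∈ f.maxGenEigenspace ν) (hz : z ∈ f.maxGenEigenspace ρ) (h : x + y + z = 0) : x = 0 := by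
  have hyz : -(y + z) ∈ ⨆ (w) (_ : w ≠ μ), f.maxGenEigenspace w :=
    neg_mem <| add_mem (Submodule.mem_iSup_of_mem ν (Submodule.mem_iSup_of_mem hν hy))
      (Submodule.mem_iSup_of_mem ρ (Submodule.mem_iSup_of_mem hρ hz))
  rw [← eq_neg_of_add_eq_zero_left (by rwa [add_assoc] at h)] at hyz
  exact Submodule.disjoint_def.mp (iSupIndep_def.mp f.independent_maxGenEigenspace μ) x hx hyz

theorem surjOn_maxGenEigenspace [FiniteDimensional K V] (f : End K V) {μ : K} (hμ : μ ≠ 0) :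
    SurjOn f (f.maxGenEigenspace μ) (f.maxGenEigenspace μ) := by
  rw [← LinearMap.injOn_iff_surjOn (mapsTo_maxGenEigenspace_of_comm (Commute.refl f) μ)]
  intro x hx y hy hxy
  have hker : x - y ∈ f.maxGenEigenspace 0 :=
    (f.mem_maxGenEigenspace 0 _).mpr ⟨1, by simp [hxy]⟩
  exact sub_eq_zero.mp <| Submodule.disjoint_def.mp (f.disjoint_genEigenspace hμ ⊤ ⊤) _
    (sub_mem hx hy) hker

theorem exists_ne_zero_maxGenEigenspace_ne_bot [IsAlgClosed K] [FiniteDimensional K V]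
    (f : End K V) (hf : ¬ IsNilpotent f) : ∃ μ ≠ 0, f.maxGenEigenspace μ ≠ ⊥ := by
  by_contra! h
  refine hf (((LinearMap.charpoly_nilpotent_tfae f).out 0 2).mpr fun m ↦ ?_)
  have htop : f.maxGenEigenspace 0 = ⊤ := by
    rw [← f.iSup_maxGenEigenspace_eq_top, iSup_split_single _ 0]
    simp +contextual [h]
  simpa using (f.mem_maxGenEigenspace 0 m).mp (htop ▸ Submodule.mem_top)

end Module.End

section

variable {K L : Type*} [Field K] [LieRing L] [LieAlgebra K L]

def IsDeltaDerivation (δ : K) (D : Module.End K L) : Prop :=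
  ∀ x y : L, D ⁅x, y⁆ = δ • ⁅D x, y⁆ + δ • ⁅x, D y⁆

variable (K L) in
def lieBilin : L →ₗ[K] L →ₗ[K] L :=
  LinearMap.mk₂ K (fun x y : L ↦ ⁅x, y⁆) add_lie smul_lie lie_add lie_smul

@[simp]
theorem lieBilin_apply (x y : L) : lieBilin K L x y = ⁅x, y⁆ :=
  rfl

def bracketSpan (U V : Submodule K L) : Submodule K L :=
  Submodule.map₂ (lieBilin K L) U V

theorem lie_mem_bracketSpan {U V : Submodule K L} {u v : L} (hu : u ∈ U) (hv : v ∈ V) :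
    ⁅u, v⁆ ∈ bracketSpan U V :=
  Submodule.apply_mem_map₂ _ hu hv

theorem bracketSpan_le {U V W : Submodule K L} :
    bracketSpan U V ≤ W ↔ ∀ u ∈ U, ∀ v ∈ V, ⁅u, v⁆ ∈ W :=
  Submodule.map₂_le

theorem bracketSpan_eq_bot {U V : Submodule K L} :
    bracketSpan U V = ⊥ ↔ ∀ u ∈ U, ∀ v ∈ V, ⁅u, v⁆ = 0 := by
  simp [← le_bot_iff, bracketSpan_le]

theorem bracketSpan_comm (U V : Submodule K L) : bracketSpan U V = bracketSpan V U := by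
  refine le_antisymm ?_ ?_ <;> refine bracketSpan_le.mpr fun u hu v hv ↦ ?_ <;>
    simpa using neg_mem (lie_mem_bracketSpan hv hu)

theorem bracketSpan_bot_left (V : Submodule K L) : bracketSpan ⊥ V = ⊥ :=
  Submodule.map₂_bot_left _ V

theorem bracketSpan_bot_right (U : Submodule K L) : bracketSpan U ⊥ = ⊥ :=
  Submodule.map₂_bot_right _ U

theorem bracketSpan_top_top_eq_top
    (hperf : ⁅(⊤ : LieIdeal K L), (⊤ : LieIdeal K L)⁆ = ⊤) :
    bracketSpan (⊤ : Submodule K L) ⊤ = ⊤ := by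
  rw [bracketSpan, Submodule.map₂_eq_span_image2, eq_top_iff]
  have := LieSubmodule.lieIdeal_oper_eq_linear_span' (⊤ : LieIdeal K L) (⊤ : LieIdeal K L)
  rw [hperf, LieSubmodule.top_toSubmodule] at this
  refine this.le.trans (Submodule.span_mono ?_)
  rintro _ ⟨x, -, y, -, rfl⟩
  exact ⟨x, trivial, y, trivial, rfl⟩

namespace IsDeltaDerivation

variable {δ : K} {D : Module.End K L}

theorem map_lie (hD : IsDeltaDerivation δ D) (x y : L) :
    D ⁅x, y⁆ = δ • ⁅D x, y⁆ + δ • ⁅x, D y⁆ :=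
  hD x y

theorem sub_smul_one_apply_lie (hD : IsDeltaDerivation δ D) (a b : K) (u v : L) :
    (D - (δ * (a + b)) • 1) ⁅u, v⁆ = δ • ⁅(D - a • 1) u, v⁆ + δ • ⁅u, (D - b • 1) v⁆ := by
  simp only [LinearMap.sub_apply, LinearMap.smul_apply, Module.End.one_apply, hD.map_lie,
    sub_lie, lie_sub, smul_lie, lie_smul]
  module

theorem lie_mem_maxGenEigenspace (hD : IsDeltaDerivation δ D) {a b : K} {x y : L}
    (hx : x ∈ D.maxGenEigenspace a) (hy : y ∈ D.maxGenEigenspace b) :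
    ⁅x, y⁆ ∈ D.maxGenEigenspace (δ * (a + b)) := by
  obtain ⟨m, hm⟩ := (D.mem_maxGenEigenspace a x).mp hx
  obtain ⟨n, hn⟩ := (D.mem_maxGenEigenspace b y).mp hy
  refine (D.mem_maxGenEigenspace _ _).mpr ⟨m + n, ?_⟩
  clear hx hy
  induction m generalizing n x y with
  | zero => simp_all
  | succ m ihm =>
    induction n generalizing y with
    | zero => simp_all
    | succ n ihn =>
      rw [show m + 1 + (n + 1) = m + (n + 1) + 1 by omega, pow_succ, Module.End.mul_apply,
        hD.sub_smul_one_apply_lie, map_add, map_smul, map_smul,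
        ihm (by rwa [← Module.End.mul_apply, ← pow_succ]) (n + 1) hn,
        show m + (n + 1) = m + 1 + n by omega,
        ihn (by rwa [← Module.End.mul_apply, ← pow_succ]), smul_zero, add_zero]

/-- Filippov's identity. -/
theorem lie_apply_lie_cyclic_eq_zero (hD : IsDeltaDerivation δ D) (hδ0 : δ ≠ 0) (hδ1 : δ ≠ 1)
    (x y z : L) :
    ⁅D x, ⁅y, z⁆⁆ + ⁅D y, ⁅z, x⁆⁆ + ⁅D z, ⁅x, y⁆⁆ = 0 := by
  have hDjac := congrArg D (lie_jacobi x y z)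
  simp only [map_add, map_zero, hD.map_lie, lie_add, lie_smul] at hDjac
  have h := lie_jacobi (D x) y z
  have h' := lie_jacobi (D y) z x
  have h'' := lie_jacobi (D z) x y
  have hne : δ - δ * δ ≠ 0 := by
    rw [show δ - δ * δ = δ * (1 - δ) by ring]
    exact mul_ne_zero hδ0 (sub_ne_zero.mpr hδ1.symm)
  refine smul_right_injective L hne ?_
  simp only [smul_zero]
  linear_combination (norm := module) hDjac - (δ * δ) • (h + h' + h'')

theorem maxGenEigenspace_le_iSup_bracketSpan [IsAlgClosed K] [FiniteDimensional K L]
    (hD : IsDeltaDerivation δ D) (hperf : ⁅(⊤ : LieIdeal K L), (⊤ : LieIdeal K L)⁆ = ⊤)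
    (c : K) :
    D.maxGenEigenspace c ≤ ⨆ (p) (q) (_ : δ * (p + q) = c),
      bracketSpan (D.maxGenEigenspace p) (D.maxGenEigenspace q) := by
  refine D.independent_maxGenEigenspace.le_of_forall_le_of_le_iSup (N := fun w ↦
    ⨆ (p) (q) (_ : δ * (p + q) = w), bracketSpan (D.maxGenEigenspace p) (D.maxGenEigenspace q))
    (fun w ↦ ?_) ?_
  · refine iSup₂_le fun p q ↦ iSup_le fun hpq ↦ bracketSpan_le.mpr fun u hu v hv ↦ ?_
    exact hpq ▸ hD.lie_mem_maxGenEigenspace hu hv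
  · have htop : ⊤ ≤ ⨆ (p) (q), bracketSpan (D.maxGenEigenspace p) (D.maxGenEigenspace q) := by
      rw [← bracketSpan_top_top_eq_top hperf, ← D.iSup_maxGenEigenspace_eq_top, bracketSpan,
        Submodule.map₂_iSup_left]
      simp_rw [Submodule.map₂_iSup_right]
      rfl
    refine le_top.trans (htop.trans (iSup₂_le fun p q ↦ ?_))
    exact le_iSup₂_of_le (δ * (p + q)) p (le_iSup₂_of_le q rfl le_rfl)

theorem exists_bracketSpan_ne_bot [IsAlgClosed K] [FiniteDimensional K L]
    (hD : IsDeltaDerivation δ D) (hperf : ⁅(⊤ : LieIdeal K L), (⊤ : LieIdeal K L)⁆ = ⊤)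
    {c : K} (hc : D.maxGenEigenspace c ≠ ⊥) :
    ∃ p q, δ * (p + q) = c ∧ bracketSpan (D.maxGenEigenspace p) (D.maxGenEigenspace q) ≠ ⊥ := by
  by_contra! h
  refine hc (eq_bot_iff.mpr ((hD.maxGenEigenspace_le_iSup_bracketSpan hperf c).trans ?_))
  simp +contextual [h]

/-- Write `x = D x'` with `x' ∈ L_a`; of the three terms of Filippov's identity for `(x', u, v)`,
`⁅D x', ⁅u, v⁆⁆` is the only one with weight `δ(a + δ(p+q))`. -/
theorem lie_lie_eq_zero_of_mem_maxGenEigenspace [FiniteDimensional K L]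
    (hD : IsDeltaDerivation δ D) (hδ0 : δ ≠ 0) (hδ1 : δ ≠ 1) {a p q : K} (ha : a ≠ 0)
    (hpa : p ≠ a) (hqa : q ≠ a) {x u v : L} (hx : x ∈ D.maxGenEigenspace a)
    (hu : u ∈ D.maxGenEigenspace p) (hv : v ∈ D.maxGenEigenspace q) : ⁅x, ⁅u, v⁆⁆ = 0 := by
  obtain ⟨x, hx', rfl⟩ := D.surjOn_maxGenEigenspace ha hx
  have hD' {y : L} {w : K} (hy : y ∈ D.maxGenEigenspace w) : D y ∈ D.maxGenEigenspace w :=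
    Module.End.mapsTo_maxGenEigenspace_of_comm (Commute.refl D) w hy
  have hδ : δ * (1 - δ) ≠ 0 := mul_ne_zero hδ0 (sub_ne_zero.mpr hδ1.symm)
  refine D.eq_zero_of_add_add_eq_zero_of_mem_maxGenEigenspace ?_ ?_
    (hD.lie_mem_maxGenEigenspace (hD' hx') (hD.lie_mem_maxGenEigenspace hu hv))
    (hD.lie_mem_maxGenEigenspace (hD' hu) (hD.lie_mem_maxGenEigenspace hv hx'))
    (hD.lie_mem_maxGenEigenspace (hD' hv) (hD.lie_mem_maxGenEigenspace hx' hu))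
    (hD.lie_apply_lie_cyclic_eq_zero hδ0 hδ1 x u v)
  · refine fun h ↦ mul_ne_zero hδ (sub_ne_zero.mpr hpa) ?_
    linear_combination h
  · refine fun h ↦ mul_ne_zero hδ (sub_ne_zero.mpr hqa) ?_
    linear_combination h

theorem bracketSpan_div_sub_ne_bot [IsAlgClosed K] [FiniteDimensional K L]
    (hD : IsDeltaDerivation δ D) (hperf : ⁅(⊤ : LieIdeal K L), (⊤ : LieIdeal K L)⁆ = ⊤)
    (hδ0 : δ ≠ 0) (hδ1 : δ ≠ 1) {a b : K} (ha : a ≠ 0)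
    (h : bracketSpan (D.maxGenEigenspace a) (D.maxGenEigenspace b) ≠ ⊥) :
    bracketSpan (D.maxGenEigenspace a) (D.maxGenEigenspace (b / δ - a)) ≠ ⊥ := by
  contrapose! h
  rw [bracketSpan_eq_bot] at h ⊢
  intro u hu v hv
  suffices ⨆ (p) (q) (_ : δ * (p + q) = b), bracketSpan (D.maxGenEigenspace p)
      (D.maxGenEigenspace q) ≤ LinearMap.ker (lieBilin K L u) from
    this (hD.maxGenEigenspace_le_iSup_bracketSpan hperf b hv)
  refine iSup₂_le fun p q ↦ iSup_le fun hpq ↦ bracketSpan_le.mpr fun x hx y hy ↦ ?_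
  have hpq' : p + q = b / δ := by field_simp; linear_combination hpq
  rw [LinearMap.mem_ker, lieBilin_apply]
  by_cases hpa : p = a
  · rw [h x (hpa ▸ hx) y (by rwa [← hpa, ← hpq', add_sub_cancel_left]), lie_zero]
  by_cases hqa : q = a
  · rw [← lie_skew x y, h y (hqa ▸ hy) x (by rwa [← hqa, ← hpq', add_sub_cancel_right]),
      neg_zero, lie_zero]
  exact hD.lie_lie_eq_zero_of_mem_maxGenEigenspace hδ0 hδ1 ha hpa hqa hu hx hy

end IsDeltaDerivation

end

namespace IsDeltaDerivation

section

variable {K L : Type*} [NormedField K] [IsAlgClosed K] [LieRing L] [LieAlgebra K L]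
  [FiniteDimensional K L] {δ : K} {D : Module.End K L}

/-- `c ↦ c / δ - a` maps the finite set of `c` with `⁅L_a, L_c⁆ ≠ 0` into itself and contracts
distances to `-δa/(δ-1)` by `‖δ‖⁻¹`, so that set is at most `{-δa/(δ-1)}`. -/
theorem mul_add_sub_one_mul_eq_zero (hD : IsDeltaDerivation δ D)
    (hperf : ⁅(⊤ : LieIdeal K L), (⊤ : LieIdeal K L)⁆ = ⊤) (hδ : 1 < ‖δ‖) {a b : K} (ha : a ≠ 0)
    (h : bracketSpan (D.maxGenEigenspace a) (D.maxGenEigenspace b) ≠ ⊥) :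
    δ * a + (δ - 1) * b = 0 := by
  have hδ0 : δ ≠ 0 := by rintro rfl; simp at hδ; linarith
  have hδ1 : δ ≠ 1 := by rintro rfl; simp at hδ
  have hS : {c | bracketSpan (D.maxGenEigenspace a) (D.maxGenEigenspace c) ≠ ⊥}.Finite :=
    (WellFoundedGT.finite_ne_bot_of_iSupIndep D.independent_maxGenEigenspace).subset
      fun c hc hbot ↦ hc (by rw [hbot, bracketSpan_bot_right])
  have hb := hS.subset_singleton_of_dist_map_eq_mul (T := fun c ↦ c / δ - a)
    (β := -(δ * a) / (δ - 1)) (r := ‖δ‖⁻¹)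
    (fun c hc ↦ hD.bracketSpan_div_sub_ne_bot hperf hδ0 hδ1 ha hc) (by positivity)
    (inv_lt_one_of_one_lt₀ hδ) (fun c ↦ ?_) h
  · rw [mem_singleton_iff, eq_div_iff (sub_ne_zero.mpr hδ1)] at hb
    linear_combination hb
  · rw [dist_eq_norm, dist_eq_norm, ← norm_inv, ← norm_mul]
    congr 1
    field_simp [sub_ne_zero.mpr hδ1]
    ring

theorem one_half_le_norm (hD : IsDeltaDerivation δ D)
    (hperf : ⁅(⊤ : LieIdeal K L), (⊤ : LieIdeal K L)⁆ = ⊤) (hnil : ¬ IsNilpotent D) :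
    1 / 2 ≤ ‖δ‖ := by
  obtain ⟨c, hc0, hc⟩ := D.exists_ne_zero_maxGenEigenspace_ne_bot hnil
  obtain ⟨γ, hγ, hmax⟩ := exists_max_image _ (‖·‖)
    (WellFoundedGT.finite_ne_bot_of_iSupIndep D.independent_maxGenEigenspace) ⟨c, hc⟩
  obtain ⟨p, q, hpq, hne⟩ := hD.exists_bracketSpan_ne_bot hperf hγ
  have hp : ‖p‖ ≤ ‖γ‖ := hmax p fun h ↦ hne (by rw [h, bracketSpan_bot_left])
  have hq : ‖q‖ ≤ ‖γ‖ := hmax q fun h ↦ hne (by rw [h, bracketSpan_bot_right])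
  have hγ0 : 0 < ‖γ‖ := (norm_pos_iff.mpr hc0).trans_le (hmax c hc)
  have : ‖γ‖ ≤ ‖δ‖ * (2 * ‖γ‖) :=
    calc ‖γ‖ = ‖δ‖ * ‖p + q‖ := by rw [← hpq, norm_mul]
      _ ≤ ‖δ‖ * (‖p‖ + ‖q‖) := by gcongr; exact norm_add_le p q
      _ ≤ ‖δ‖ * (2 * ‖γ‖) := by gcongr; linarith
  nlinarith

end

theorem norm_le_one {L : Type*} [LieRing L] [LieAlgebra ℂ L]
    [FiniteDimensional ℂ L] {δ : ℂ} {D : Module.End ℂ L} (hD : IsDeltaDerivation δ D)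
    (hperf : ⁅(⊤ : LieIdeal ℂ L), (⊤ : LieIdeal ℂ L)⁆ = ⊤) (hnil : ¬ IsNilpotent D) :
    ‖δ‖ ≤ 1 := by
  by_contra! hδ
  obtain ⟨c, hc0, hc⟩ := D.exists_ne_zero_maxGenEigenspace_ne_bot hnil
  obtain ⟨p, q, hpq, hne⟩ := hD.exists_bracketSpan_ne_bot hperf hc
  wlog hp : p ≠ 0 generalizing p q
  · refine this q p (by rwa [add_comm]) (by rwa [bracketSpan_comm]) fun hq ↦ hc0 ?_
    rw [← hpq, not_not.mp hp, hq, add_zero, mul_zero]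
  have h₁ := hD.mul_add_sub_one_mul_eq_zero hperf hδ hp hne
  have hq : q ≠ 0 := by
    rintro rfl
    exact hp (by simpa [show δ ≠ 0 by rintro rfl; simp at hδ; linarith] using h₁)
  have h₂ := hD.mul_add_sub_one_mul_eq_zero hperf hδ hq (by rwa [bracketSpan_comm])
  have hδ_half : δ = 1 / 2 := by
    refine mul_left_cancel₀ hp ?_
    linear_combination (δ * h₁ - (δ - 1) * h₂) / 2
  rw [hδ_half] at hδ
  norm_num at hδ

end IsDeltaDerivation

/-- For a non-nilpotent δ-derivation of a finite-dimensional perfect complex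
Lie algebra, `1/2 ≤ |δ| ≤ 1`. -/
theorem delta_bounds_of_non_nilpotent (L : Type*) [LieRing L] [LieAlgebra ℂ L]
    [FiniteDimensional ℂ L]
    (hperf : ⁅(⊤ : LieIdeal ℂ L), (⊤ : LieIdeal ℂ L)⁆ = ⊤)
    (δ : ℂ) (D : Module.End ℂ L)
    (hD : ∀ x y : L, D ⁅x, y⁆ = δ • ⁅D x, y⁆ + δ • ⁅x, D y⁆)
    (hnil : ¬ IsNilpotent D) :
    1 / 2 ≤ ‖δ‖ ∧ ‖δ‖ ≤ 1 :=
  ⟨IsDeltaDerivation.one_half_le_norm hD hperf hnil, IsDeltaDerivation.norm_le_one hD hperf hnil⟩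
end

section
/- Let A and B be superalgebras over K and D a δ-derivation of A (as an ungraded algebra). Then the map D̂ : (A⊗B)₀ → A⊗B defined by a₀⊗b₀ + a₁⊗b₁ ↦ D(a₀)⊗b₀ + D(a₁)⊗b₁ satisfies D̂((u)(v)) = δ(D̂(u)·v + u·D̂(v)) for all u, v in the even part (A⊗B)₀, where multiplication in A⊗B is (a⊗b)(a'⊗b') = aa'⊗bb'. -/
open TensorProduct in
/-- If `A`, `B` are superalgebras and `D` is a δ-derivation of `A` (as an
ungraded algebra), then the map `D̂ = D ⊗ id`, which sends
`a₀⊗b₀ + a₁⊗b₁ ↦ D a₀ ⊗ b₀ + D a₁ ⊗ b₁`, satisfies the δ-derivation identity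
on the even part `(A⊗B)₀ = A₀⊗B₀ ⊕ A₁⊗B₁`. -/
theorem grassmann_type_delta_derivation (K A B : Type*) [Field K]
    [NonUnitalNonAssocRing A] [Module K A] [SMulCommClass K A A]
    [IsScalarTower K A A]
    [NonUnitalNonAssocRing B] [Module K B] [SMulCommClass K B B]
    [IsScalarTower K B B]
    (A0 A1 : Submodule K A) (B0 B1 : Submodule K B)
    (hA : IsCompl A0 A1) (hB : IsCompl B0 B1)
    (hA00 : ∀ x ∈ A0, ∀ y ∈ A0, x * y ∈ A0)
    (hA01 : ∀ x ∈ A0, ∀ y ∈ A1, x * y ∈ A1)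
    (hA10 : ∀ x ∈ A1, ∀ y ∈ A0, x * y ∈ A1)
    (hA11 : ∀ x ∈ A1, ∀ y ∈ A1, x * y ∈ A0)
    (hB00 : ∀ x ∈ B0, ∀ y ∈ B0, x * y ∈ B0)
    (hB01 : ∀ x ∈ B0, ∀ y ∈ B1, x * y ∈ B1)
    (hB10 : ∀ x ∈ B1, ∀ y ∈ B0, x * y ∈ B1)
    (hB11 : ∀ x ∈ B1, ∀ y ∈ B1, x * y ∈ B0)
    (δ : K) (D : A →ₗ[K] A)
    (hD : ∀ x y : A, D (x * y) = δ • (D x * y) + δ • (x * D y)) :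
    ∀ u v : A ⊗[K] B,
      u ∈ (LinearMap.range (TensorProduct.map A0.subtype B0.subtype) ⊔
           LinearMap.range (TensorProduct.map A1.subtype B1.subtype)) →
      v ∈ (LinearMap.range (TensorProduct.map A0.subtype B0.subtype) ⊔
           LinearMap.range (TensorProduct.map A1.subtype B1.subtype)) →
      (TensorProduct.map D LinearMap.id) (u * v) =
        δ • ((TensorProduct.map D LinearMap.id) u * v) +
        δ • (u * (TensorProduct.map D LinearMap.id) v) := by
  intro u v hu hv
  clear hu hv
  induction u with
  | zero => simp
  | tmul a b =>
    induction v with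
    | zero => simp
    | tmul a' b' =>
      simp only [Algebra.TensorProduct.tmul_mul_tmul, TensorProduct.map_tmul,
        LinearMap.id_coe, id_eq, hD, TensorProduct.add_tmul,
        TensorProduct.smul_tmul']
    | add x y hx hy =>
      simp only [mul_add, map_add, hx, hy, smul_add]
      abel
  | add x y hx hy =>
    simp only [add_mul, map_add, hx, hy, smul_add]
    abel
end

section
/- For the two-dimensional nonabelian Lie algebra L over a field K of characteristic ≠ 2, with basis e₀, e_γ such that [e₀,e_γ] = γ e_γ, γ ≠ 0, the space of (1/2)-derivations of L is two-dimensional, spanned by the identity map id and the map D_γ: e₀ ↦ e_γ, e_γ ↦ 0, and Der_{1/2}(L) ≅ K[x]/(x²). -/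
open Polynomial

section aux
variable {K L : Type*} [Field K] [LieRing L] [LieAlgebra K L]
  (b : Module.Basis (Fin 2) K L) (hbr : ⁅b 0, b 1⁆ = b 1)

lemma decomp (x : L) : x = b.repr x 0 • b 0 + b.repr x 1 • b 1 := by
  have := b.sum_repr x
  rw [Fin.sum_univ_two] at this
  exact this.symm

include hbr in
lemma lie_b1 (x : L) : ⁅x, b 1⁆ = b.repr x 0 • b 1 := by
  conv_lhs => rw [decomp b x]
  simp [add_lie, smul_lie, hbr]

include hbr in
lemma b1_lie (y : L) : ⁅b 1, y⁆ = -(b.repr y 0) • b 1 := by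
  rw [← lie_skew, lie_b1 b hbr, neg_smul]

include hbr in
lemma b0_lie (y : L) : ⁅b 0, y⁆ = b.repr y 1 • b 1 := by
  conv_lhs => rw [decomp b y]
  simp [lie_add, lie_smul, hbr]

include hbr in
lemma lie_formula (x y : L) :
    ⁅x, y⁆ = (b.repr x 0 * b.repr y 1 - b.repr x 1 * b.repr y 0) • b 1 := by
  conv_lhs => rw [decomp b x]
  rw [add_lie, smul_lie, smul_lie, b0_lie b hbr, b1_lie b hbr, smul_smul, smul_smul,
    ← add_smul]
  ring_nf

end aux

section aux2
variable {K L : Type*} [Field K] [LieRing L] [LieAlgebra K L]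
  (b : Module.Basis (Fin 2) K L) (hbr : ⁅b 0, b 1⁆ = b 1)

noncomputable def Nmap : Module.End K L := LinearMap.smulRight (b.coord 0) (b 1)

lemma Nmap_apply (x : L) : Nmap b x = b.repr x 0 • b 1 := rfl

lemma Nmap_b0 : Nmap b (b 0) = b 1 := by simp [Nmap_apply]

lemma Nmap_b1 : Nmap b (b 1) = 0 := by simp [Nmap_apply]

lemma Nmap_sq : Nmap b * Nmap b = 0 := by
  ext x
  simp [Module.End.mul_apply, Nmap_apply]

include hbr in
lemma Nmap_half (x y : L) :
    Nmap b ⁅x, y⁆ = (2 : K)⁻¹ • (⁅Nmap b x, y⁆ + ⁅x, Nmap b y⁆) := by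
  rw [Nmap_apply, Nmap_apply, Nmap_apply, lie_formula b hbr x y, smul_lie,
    b1_lie b hbr, lie_smul, lie_b1 b hbr]
  simp [smul_smul]
  ring_nf
  rw [neg_add_cancel]

include hbr in
lemma classify (h2 : (2 : K) ≠ 0) (D : Module.End K L)
    (hD : ∀ x y : L, D ⁅x, y⁆ = (2 : K)⁻¹ • (⁅D x, y⁆ + ⁅x, D y⁆)) :
    D = b.repr (D (b 0)) 0 • (1 : Module.End K L) + b.repr (D (b 0)) 1 • Nmap b := by
  set c₁ := b.repr (D (b 0)) 0 with hc₁
  have key := hD (b 0) (b 1)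
  rw [hbr, lie_b1 b hbr, b0_lie b hbr] at key
  -- key : D (b 1) = 2⁻¹ • (c₁ • b 1 + (b.repr (D (b 1)) 1) • b 1)
  have h0 : b.repr (D (b 1)) 0 = 0 := by
    have := congrArg (fun z => b.repr z 0) key
    simpa [← smul_assoc, smul_eq_mul] using this
  have h1 : b.repr (D (b 1)) 1 = c₁ := by
    have := congrArg (fun z => b.repr z 1) key
    simp [← smul_assoc, smul_eq_mul] at this
    field_simp at this
    linear_combination this
  apply b.ext
  intro i
  fin_cases i
  · simp [Nmap_b0, Nmap_b1]
    conv_lhs => rw [decomp b (D (b 0))]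
  · simp [Nmap_b0, Nmap_b1]
    conv_lhs => rw [decomp b (D (b 1))]
    rw [h0, h1]
    simp

end aux2

section aux3
variable {K L : Type*} [Field K] [LieRing L] [LieAlgebra K L]
  (b : Module.Basis (Fin 2) K L) (hbr : ⁅b 0, b 1⁆ = b 1)

def IsHalfDer (K : Type*) {L : Type*} [Field K] [LieRing L] [LieAlgebra K L]
    (D : Module.End K L) : Prop :=
  ∀ x y : L, D ⁅x, y⁆ = (2 : K)⁻¹ • (⁅D x, y⁆ + ⁅x, D y⁆)

lemma hd_one (h2 : (2 : K) ≠ 0) : IsHalfDer K (1 : Module.End K L) := by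
  intro x y
  simp only [Module.End.one_apply]
  rw [← two_smul K ⁅x,y⁆, smul_smul, inv_mul_cancel₀ h2, one_smul]

lemma hd_add {D E : Module.End K L} (hD : IsHalfDer K D) (hE : IsHalfDer K E) :
    IsHalfDer K (D + E) := by
  intro x y
  simp only [LinearMap.add_apply, hD x y, hE x y, add_lie, lie_add, ← smul_add]
  congr 1
  abel

lemma hd_smul (c : K) {D : Module.End K L} (hD : IsHalfDer K D) :
    IsHalfDer K (c • D) := by
  intro x y
  simp only [LinearMap.smul_apply, hD x y, smul_lie, lie_smul, ← smul_add, smul_comm c]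

include hbr in
lemma hd_combo (h2 : (2 : K) ≠ 0) (c₁ c₂ : K) :
    IsHalfDer K (c₁ • (1 : Module.End K L) + c₂ • Nmap b) :=
  hd_add (hd_smul c₁ (hd_one h2)) (hd_smul c₂ (Nmap_half b hbr))

end aux3

section aux4
variable {K L : Type*} [Field K] [LieRing L] [LieAlgebra K L]

lemma combo_mul (b : Module.Basis (Fin 2) K L) (c₁ c₂ d₁ d₂ : K) :
    (c₁ • (1 : Module.End K L) + c₂ • Nmap b) * (d₁ • 1 + d₂ • Nmap b)
      = (c₁ * d₁) • 1 + (c₁ * d₂ + c₂ * d₁) • Nmap b := by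
  simp only [add_mul, mul_add, smul_mul_assoc, mul_smul_comm, one_mul, mul_one,
    Nmap_sq, smul_zero, smul_smul, add_smul, smul_add]
  module

noncomputable def Shd (b : Module.Basis (Fin 2) K L) (hbr : ⁅b 0, b 1⁆ = b 1)
    (h2 : (2 : K) ≠ 0) : Subalgebra K (Module.End K L) where
  carrier := {D | IsHalfDer K D}
  mul_mem' := by
    intro D E hD hE
    show IsHalfDer K (D * E)
    rw [classify b hbr h2 D hD, classify b hbr h2 E hE, combo_mul]
    exact hd_combo b hbr h2 _ _
  one_mem' := hd_one h2
  add_mem' := fun hD hE => hd_add hD hE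
  zero_mem' := by intro x y; simp
  algebraMap_mem' := fun c => by
    show IsHalfDer K _
    rw [Algebra.algebraMap_eq_smul_one]
    exact hd_smul c (hd_one h2)

lemma mem_Shd (b : Module.Basis (Fin 2) K L) (hbr : ⁅b 0, b 1⁆ = b 1)
    (h2 : (2 : K) ≠ 0) (D : Module.End K L) :
    D ∈ Shd b hbr h2 ↔ IsHalfDer K D := Iff.rfl

end aux4

section aux5
variable {K L : Type*} [Field K] [LieRing L] [LieAlgebra K L]
  (b : Module.Basis (Fin 2) K L) (hbr : ⁅b 0, b 1⁆ = b 1) (h2 : (2 : K) ≠ 0)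

lemma shd_equiv :
    Nonempty ((Shd b hbr h2) ≃ₐ[K]
      (Polynomial K ⧸ (Ideal.span {Polynomial.X ^ 2} : Ideal (Polynomial K)))) := by
  set S := Shd b hbr h2 with hS
  set n : S := ⟨Nmap b, Nmap_half b hbr⟩ with hn
  have hn2 : n * n = 0 := Subtype.ext (Nmap_sq b)
  have h0 : ∀ p ∈ (Ideal.span {X ^ 2} : Ideal (Polynomial K)), aeval n p = 0 := by
    intro p hp
    rw [Ideal.mem_span_singleton] at hp
    obtain ⟨q, rfl⟩ := hp
    rw [map_mul, map_pow, aeval_X, pow_two, hn2, zero_mul]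
  set φ : (Polynomial K ⧸ (Ideal.span {X ^ 2} : Ideal (Polynomial K))) →ₐ[K] S :=
    Ideal.Quotient.liftₐ _ (aeval n) h0 with hφ
  have hφmk : ∀ p : Polynomial K, φ (Ideal.Quotient.mk _ p) = aeval n p := by
    intro p; rfl
  have hsurj : Function.Surjective φ := by
    intro s
    have hc := classify b hbr h2 s.1 s.2
    set c₁ := b.repr (s.1 (b 0)) 0
    set c₂ := b.repr (s.1 (b 0)) 1
    refine ⟨Ideal.Quotient.mk _ (C c₁ + C c₂ * X), ?_⟩
    rw [hφmk]
    apply Subtype.ext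
    rw [map_add, map_mul, aeval_C, aeval_C, aeval_X, hc]
    simp only [Subalgebra.coe_add, Subalgebra.coe_mul]
    rw [show ((algebraMap K S c₁ : S) : Module.End K L) = algebraMap K (Module.End K L) c₁ from rfl,
      show ((algebraMap K S c₂ : S) : Module.End K L) = algebraMap K (Module.End K L) c₂ from rfl,
      Algebra.algebraMap_eq_smul_one, Algebra.algebraMap_eq_smul_one, smul_mul_assoc, one_mul]
  have hinj : Function.Injective φ := by
    rw [injective_iff_map_eq_zero]
    intro a ha
    obtain ⟨p, rfl⟩ := Ideal.Quotient.mk_surjective a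
    rw [hφmk] at ha
    rw [Ideal.Quotient.eq_zero_iff_mem, Ideal.mem_span_singleton]
    have hm : (X ^ 2 : Polynomial K).Monic := monic_X_pow 2
    have hdec := modByMonic_add_div p (X ^ 2 : Polynomial K)
    set r := p %ₘ X ^ 2 with hrdef
    have hr0 : aeval n r = 0 := by
      have h' := congrArg (aeval n) hdec
      rwa [map_add, map_mul, map_pow, aeval_X, pow_two, hn2, zero_mul, add_zero, ha] at h'
    have hdeg : r.degree ≤ 1 := by
      have hlt := degree_modByMonic_lt p hm
      rw [degree_X_pow] at hlt
      exact Order.lt_succ_iff.mp (by exact_mod_cast hlt)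
    have hrX : r = C (r.coeff 1) * X + C (r.coeff 0) := eq_X_add_C_of_degree_le_one hdeg
    rw [hrX, map_add, map_mul, aeval_C, aeval_C, aeval_X] at hr0
    have hval := congrArg (Subtype.val) hr0
    simp only [Subalgebra.coe_add, Subalgebra.coe_mul, ZeroMemClass.coe_zero] at hval
    rw [show ((algebraMap K S (r.coeff 1) : S) : Module.End K L)
        = algebraMap K (Module.End K L) (r.coeff 1) from rfl,
      show ((algebraMap K S (r.coeff 0) : S) : Module.End K L)
        = algebraMap K (Module.End K L) (r.coeff 0) from rfl] at hval
    have happ := congrArg (fun f : Module.End K L => f (b 0)) hval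
    simp only [LinearMap.add_apply, Module.End.mul_apply, Module.algebraMap_end_apply,
      LinearMap.zero_apply] at happ
    rw [show ((n : S) : Module.End K L) (b 0) = b 1 from Nmap_b0 b] at happ
    have e1 : r.coeff 1 = 0 := by
      have := congrArg (fun z => b.repr z 1) happ
      simpa using this
    have e0 : r.coeff 0 = 0 := by
      have := congrArg (fun z => b.repr z 0) happ
      simpa using this
    have hr : r = 0 := by rw [hrX, e0, e1]; simp
    exact ⟨p /ₘ X ^ 2, by rw [hr, zero_add] at hdec; exact hdec.symm⟩
  exact ⟨(AlgEquiv.ofBijective φ ⟨hinj, hsurj⟩).symm⟩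

end aux5

/-- For the two-dimensional nonabelian Lie algebra `L` (basis `h, e` with
`[h,e] = e`) over a field of characteristic `≠ 2`, the space of
(1/2)-derivations is two-dimensional, spanned by the identity and the
nilpotent map `N : h ↦ e, e ↦ 0`, and is isomorphic as a commutative algebra
to `K[x]/(x²)`. -/
theorem half_derivations_two_dim_nonabelian (K L : Type*) [Field K]
    [LieRing L] [LieAlgebra K L] (h2 : (2 : K) ≠ 0) (b : Module.Basis (Fin 2) K L)
    (hbr : ⁅b 0, b 1⁆ = b 1) :
    ∃ N : Module.End K L,
      N (b 0) = b 1 ∧ N (b 1) = 0 ∧ N * N = 0 ∧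
      (∀ x y : L, N ⁅x, y⁆ = (2 : K)⁻¹ • (⁅N x, y⁆ + ⁅x, N y⁆)) ∧
      (∀ D : Module.End K L,
        (∀ x y : L, D ⁅x, y⁆ = (2 : K)⁻¹ • (⁅D x, y⁆ + ⁅x, D y⁆)) →
        ∃ c₁ c₂ : K, D = c₁ • (1 : Module.End K L) + c₂ • N) ∧
      ∃ S : Subalgebra K (Module.End K L),
        (∀ D : Module.End K L,
          D ∈ S ↔ ∀ x y : L, D ⁅x, y⁆ = (2 : K)⁻¹ • (⁅D x, y⁆ + ⁅x, D y⁆)) ∧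
        Nonempty (S ≃ₐ[K] (Polynomial K ⧸ (Ideal.span {Polynomial.X ^ 2} : Ideal (Polynomial K)))) := by
  exact ⟨Nmap b, Nmap_b0 b, Nmap_b1 b, Nmap_sq b, Nmap_half b hbr,
    fun D hD => ⟨_, _, classify b hbr h2 D hD⟩,
    Shd b hbr h2, fun D => Iff.rfl, shd_equiv b hbr h2⟩
end

section
/- Let L be a Lie algebra over a field of characteristic 0 (or with nilpotency conditions as appropriate) and D a nilpotent δ-derivation of L. Then exp(D) and exp(δD) are well-defined bijective linear maps and exp(D)([x,y]) = [exp(δD)(x), exp(δD)(y)] for all x,y ∈ L; in particular exp(δD) is a quasiautomorphism of L. -/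
/-!
Put `E = δ • D`. The δ-derivation rule says that `D ∘ β = β ∘ (E ⊗ 1 + 1 ⊗ E)` for the bracket
`β : L ⊗ L → L`. Since `E ⊗ 1` and `1 ⊗ E` commute, exponentiating gives
`exp D ∘ β = β ∘ (exp E ⊗ exp E)`, and exponentials of nilpotent endomorphisms are units.
In characteristic zero `L` is a `ℚ`-module through `K`, and the truncated series with
coefficients in `K` is then `IsNilpotent.exp`.
-/

open Finset TensorProduct IsNilpotent

theorem IsNilpotent.exp_eq_sum_inv_factorial_smul (K : Type*) {A : Type*} [DivisionRing K]
    [CharZero K] [Ring A] [Module K A] [Module ℚ A] [IsScalarTower ℚ K A] {a : A} {n : ℕ}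
    (h : a ^ n = 0) : exp a = ∑ i ∈ range n, (i.factorial : K)⁻¹ • a ^ i := by
  simp only [exp_eq_sum h, ← algebraMap_smul K, map_inv₀, map_natCast]

namespace Module.End

variable {R M N P : Type*} [CommRing R] [AddCommGroup M] [Module R M] [AddCommGroup N]
  [Module R N] [AddCommGroup P] [Module R P] [Module ℚ M] [Module ℚ N] [Module ℚ P]

theorem exp_apply_bilinear_of_leibniz (β : M →ₗ[R] N →ₗ[R] P) {f : Module.End R M}
    {g : Module.End R N} {h : Module.End R P} (hβ : ∀ x y, h (β x y) = β (f x) y + β x (g y))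
    (hf : IsNilpotent f) (hg : IsNilpotent g) (hh : IsNilpotent h) (x : M) (y : N) :
    exp h (β x y) = β (exp f x) (exp g y) := by
  let F : Module.End R (M ⊗[R] N) := f.rTensor N
  let G : Module.End R (M ⊗[R] N) := g.lTensor M
  have hF : IsNilpotent F := hf.map (rTensorAlgHom R M N)
  have hG : IsNilpotent G := hg.map (lTensorAlgHom R N M)
  have hFG : Commute F G := by ext; simp [F, G]
  have hlift : exp h ∘ₗ lift β = lift β ∘ₗ exp (F + G) :=
    commute_exp_left_of_commute (hFG.isNilpotent_add hF hG) hh (by ext; simp [F, G, hβ])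
  have hexpF : exp F = (exp f).rTensor N := (hf.map_exp (rTensorAlgHom R M N)).symm
  have hexpG : exp G = (exp g).lTensor M := (hg.map_exp (lTensorAlgHom R N M)).symm
  simpa [exp_add_of_commute hFG hF hG, hexpF, hexpG] using LinearMap.congr_fun hlift (x ⊗ₜ y)

end Module.End

/-- For a nilpotent δ-derivation `D` of a Lie algebra over a field of
characteristic 0, the exponentials `exp D` and `exp (δ•D)` are well-defined
bijective linear maps with `exp D ⁅x,y⁆ = ⁅exp (δ•D) x, exp (δ•D) y⁆`; in
particular `exp (δ•D)` is a quasiautomorphism. -/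
theorem exp_of_nilpotent_delta_derivation (K L : Type*) [Field K] [CharZero K]
    [LieRing L] [LieAlgebra K L] (δ : K) (D : Module.End K L)
    (hD : ∀ x y : L, D ⁅x, y⁆ = δ • ⁅D x, y⁆ + δ • ⁅x, D y⁆)
    (n : ℕ) (hn : D ^ n = 0) :
    Function.Bijective
      (∑ i ∈ Finset.range n, ((i.factorial : K)⁻¹) • D ^ i :
        Module.End K L) ∧
    Function.Bijective
      (∑ i ∈ Finset.range n, ((i.factorial : K)⁻¹) • (δ • D) ^ i :
        Module.End K L) ∧
    (∀ x y : L,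
      (∑ i ∈ Finset.range n, ((i.factorial : K)⁻¹) • D ^ i :
        Module.End K L) ⁅x, y⁆ =
      ⁅(∑ i ∈ Finset.range n, ((i.factorial : K)⁻¹) • (δ • D) ^ i :
          Module.End K L) x,
       (∑ i ∈ Finset.range n, ((i.factorial : K)⁻¹) • (δ • D) ^ i :
          Module.End K L) y⁆) ∧
    ∃ ψ : Module.End K L, Function.Bijective ψ ∧
      ∀ x y : L, ψ ⁅x, y⁆ =
        ⁅(∑ i ∈ Finset.range n, ((i.factorial : K)⁻¹) • (δ • D) ^ i :
            Module.End K L) x,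
         (∑ i ∈ Finset.range n, ((i.factorial : K)⁻¹) • (δ • D) ^ i :
            Module.End K L) y⁆ := by
  let : Module ℚ L := .compHom L (algebraMap ℚ K)
  have := IsScalarTower.of_compHom ℚ K L
  have hδn : (δ • D) ^ n = 0 := by rw [smul_pow, hn, smul_zero]
  rw [← exp_eq_sum_inv_factorial_smul K hn, ← exp_eq_sum_inv_factorial_smul K hδn]
  have hbij {A : Module.End K L} (hA : IsNilpotent A) : Function.Bijective ⇑(exp A) :=
    (Module.End.isUnit_iff _).1 (isUnit_exp hA)
  have hlie (x y : L) : exp D ⁅x, y⁆ = ⁅exp (δ • D) x, exp (δ • D) y⁆ :=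
    Module.End.exp_apply_bilinear_of_leibniz (LieModule.toEnd K L L : L →ₗ[K] Module.End K L)
      (fun x y => by simp [hD]) ⟨n, hδn⟩ ⟨n, hδn⟩ ⟨n, hn⟩ x y
  exact ⟨hbij ⟨n, hn⟩, hbij ⟨n, hδn⟩, hlie, exp D, hbij ⟨n, hn⟩, hlie⟩
end
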